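/- arXiv:2001.05599 — 8 statements merged into one kernel-verified Lean document; each statement's English description precedes it below -/
import Mathlib

section
/- Let γ̃^i_j satisfy (★) on U and let Γ^i_{jk} be the associated Christoffel symbols. For z ∈ ℂ set Γ(z)^i_{jk} := Γ^i_{jk} + z·δ^i_j·δ^i_k. Then for every z ∈ ℂ the connection with Christoffel symbols Γ(z) is torsionless and flat and the vector field e = Σ_i ∂/∂u^i is parallel; concretely, for all indices i,j,k,l and all z ∈ ℂ: (i) Γ(z)^i_{jk} = Γ(z)^i_{kj}; (ii) ∂_k Γ(z)^i_{lj} − ∂_l Γ(z)^i_{kj} + Σ_{m=1}^N ( Γ(z)^i_{km} Γ(z)^m_{lj} − Γ(z)^i_{lm} Γ(z)^m_{kj} ) = 0; (iii) Σ_{j=1}^N Γ^i_{kj} = 0. -/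
noncomputable section

variable {N : ℕ}

/-- The partial derivative `∂_k = ∂/∂u^k` of a function of `N` complex variables. -/
def pder (k : Fin N) (f : (Fin N → ℂ) → ℂ) : (Fin N → ℂ) → ℂ :=
  fun u => fderiv ℂ f u (Pi.single k 1)

/-- Kronecker delta. -/
def kron (i j : Fin N) : ℂ := if i = j then 1 else 0

/-- The system (★) for the functions `γ̃^i_j` (`i ≠ j`) on `U`. -/
def StarSystem (U : Set (Fin N → ℂ)) (γ : Fin N → Fin N → (Fin N → ℂ) → ℂ) : Prop :=
  (∀ i j k : Fin N, i ≠ j → j ≠ k → i ≠ k → ∀ u ∈ U,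
      pder k (γ i j) u =
        -(γ i j u * γ i k u) + γ i j u * γ j k u + γ i k u * γ k j u) ∧
  (∀ i j : Fin N, i ≠ j → ∀ u ∈ U, ∑ k, pder k (γ i j) u = 0)

/-- Christoffel symbols `Γ^i_{jk}` of the flat F-manifold connection in canonical coordinates,
associated to a solution `γ̃` of (★):  `Γ^i_{jk} = 0` for pairwise distinct `i,j,k`;
`Γ^i_{ij} = Γ^i_{ji} = γ̃^i_j` and `Γ^i_{jj} = −γ̃^i_j` for `i ≠ j`;
`Γ^i_{ii} = −Σ_{k≠i} γ̃^i_k`. -/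
def Gam (γ : Fin N → Fin N → (Fin N → ℂ) → ℂ) (i j k : Fin N) : (Fin N → ℂ) → ℂ :=
  if i = j ∧ i = k then fun u => -∑ l ∈ Finset.univ.erase i, γ i l u
  else if i = j then γ i k
  else if i = k then γ i j
  else if j = k then fun u => -(γ i j u)
  else 0

/-- The family of Christoffel symbols `Γ(z)^i_{jk} := Γ^i_{jk} + z δ^i_j δ^i_k`. -/
def GamZ (γ : Fin N → Fin N → (Fin N → ℂ) → ℂ) (z : ℂ) (i j k : Fin N) :
    (Fin N → ℂ) → ℂ :=
  fun u => Gam γ i j k u + (if i = j ∧ i = k then z else 0)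

/-! In canonical coordinates `Γ^i_{km}` vanishes for `m ∉ {i, k}` when `i ≠ k`, so every
contraction in the curvature collapses to a few terms, and each curvature component, sorted by
the coincidences among its indices, becomes an instance of (★); the second half of (★) enters
as `Σ_m ∂_m γ̃^i_l = 0`. The shift `z δ^i_j δ^i_k` changes the curvature by
`z (δ^i_k Γ^i_{lj} + δ_{lj} Γ^i_{kl} − (k ↔ l))`, which vanishes because `Γ^i_{jj} = −Γ^i_{ij}`
and `Γ^i_{jk} = 0` for pairwise distinct indices. -/

open Finset

section Pder

variable {k : Fin N} {u : Fin N → ℂ}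

lemma pder_zero : pder k (0 : (Fin N → ℂ) → ℂ) u = 0 := by
  simp [pder, fderiv_zero]

lemma pder_neg (f : (Fin N → ℂ) → ℂ) : pder k (fun v => -f v) u = -pder k f u := by
  simp [pder, fderiv_fun_neg]

lemma pder_add_const (f : (Fin N → ℂ) → ℂ) (c : ℂ) :
    pder k (fun v => f v + c) u = pder k f u := by
  simp [pder, fderiv_add_const]

lemma pder_sum {ι : Type*} (s : Finset ι) (f : ι → (Fin N → ℂ) → ℂ)
    (hf : ∀ m ∈ s, DifferentiableAt ℂ (f m) u) :
    pder k (fun v => ∑ m ∈ s, f m v) u = ∑ m ∈ s, pder k (f m) u := by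
  simp [pder, fderiv_fun_sum hf]

end Pder

def curvature (Γ : Fin N → Fin N → Fin N → (Fin N → ℂ) → ℂ) (i j k l : Fin N)
    (u : Fin N → ℂ) : ℂ :=
  pder k (Γ i l j) u - pder l (Γ i k j) u + ∑ m, (Γ i k m u * Γ m l j u - Γ i l m u * Γ m k j u)

section Curvature

variable (Γ : Fin N → Fin N → Fin N → (Fin N → ℂ) → ℂ) (i j k l : Fin N) (u : Fin N → ℂ)

lemma curvature_swap : curvature Γ i j l k u = -curvature Γ i j k l u := by
  simp only [curvature, neg_add, neg_sub, ← sum_neg_distrib]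

lemma curvature_self : curvature Γ i j k k u = 0 := by
  simp [curvature]

end Curvature

section Gam

variable {γ : Fin N → Fin N → (Fin N → ℂ) → ℂ} {i j k l : Fin N} {u : Fin N → ℂ}

@[simp] lemma Gam_self_self : Gam γ i i i = fun v => -∑ m ∈ univ.erase i, γ i m v := by
  simp [Gam]

@[simp] lemma Gam_self_left (h : i ≠ k) : Gam γ i i k = γ i k := by
  simp [Gam, h]

@[simp] lemma Gam_self_right (h : i ≠ j) : Gam γ i j i = γ i j := by
  simp [Gam, h]

lemma Gam_diag (h : i ≠ j) : Gam γ i j j = fun v => -γ i j v := by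
  simp [Gam, h]

lemma Gam_of_pairwise_ne (hij : i ≠ j) (hik : i ≠ k) (hjk : j ≠ k) : Gam γ i j k = 0 := by
  simp [Gam, hij, hik, hjk]

lemma Gam_comm (i j k : Fin N) : Gam γ i j k = Gam γ i k j := by
  unfold Gam
  split_ifs <;> grind

lemma sum_Gam_mul_of_ne (hik : i ≠ k) (f : Fin N → ℂ) :
    ∑ m, Gam γ i k m u * f m = γ i k u * (f i - f k) := by
  rw [Fintype.sum_eq_add i k hik fun m hm => by
      rw [Gam_of_pairwise_ne hik hm.1.symm hm.2.symm, Pi.zero_apply, zero_mul],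
    Gam_self_right hik, Gam_diag hik]
  ring

/-- The `m = i` term on the right vanishes, so the unconstrained value `γ i i` does not matter. -/
lemma sum_Gam_self_mul (f : Fin N → ℂ) :
    ∑ m, Gam γ i i m u * f m = ∑ m, γ i m u * (f m - f i) := by
  rw [← add_sum_erase _ _ (mem_univ i),
    ← add_sum_erase _ (fun m => γ i m u * (f m - f i)) (mem_univ i),
    sum_congr rfl fun m hm => by rw [Gam_self_left (ne_of_mem_erase hm).symm]]
  simp only [Gam_self_self, mul_sub, sum_sub_distrib, ← sum_mul]
  ring

lemma sum_mul_Gam_of_ne (hlj : l ≠ j) (g : Fin N → ℂ) :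
    ∑ m, g m * Gam γ m l j u = g l * γ l j u + g j * γ j l u := by
  rw [Fintype.sum_eq_add l j hlj fun m hm => by
      rw [Gam_of_pairwise_ne hm.1 hm.2 hlj, Pi.zero_apply, mul_zero],
    Gam_self_left hlj, Gam_self_right hlj.symm]

lemma sum_Gam (i k : Fin N) (u : Fin N → ℂ) : ∑ j, Gam γ i k j u = 0 := by
  rcases eq_or_ne i k with rfl | hik
  · simpa using sum_Gam_self_mul (γ := γ) (i := i) (u := u) 1
  · simpa using sum_Gam_mul_of_ne (γ := γ) (u := u) hik 1

end Gam

section GamZ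

variable {γ : Fin N → Fin N → (Fin N → ℂ) → ℂ}

lemma GamZ_apply (z : ℂ) (i j k : Fin N) (u : Fin N → ℂ) :
    GamZ γ z i j k u = Gam γ i j k u + z * (kron i j * kron i k) := by
  simp only [GamZ, kron, ite_and]
  split_ifs <;> simp

lemma sum_kron_mul (i : Fin N) (f : Fin N → ℂ) : ∑ m, kron i m * f m = f i := by
  simp [kron]

lemma sum_GamZ_mul_GamZ (z : ℂ) (i j k l : Fin N) (u : Fin N → ℂ) :
    ∑ m, GamZ γ z i k m u * GamZ γ z m l j u =
      ∑ m, Gam γ i k m u * Gam γ m l j u +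
        z * (kron i k * Gam γ i l j u + kron l j * Gam γ i k l u +
          z * (kron i k * kron i l * kron i j)) := by
  have h : ∀ m, GamZ γ z i k m u * GamZ γ z m l j u =
      Gam γ i k m u * Gam γ m l j u +
        z * (kron i k * (kron i m * Gam γ m l j u) + kron l j * (kron l m * Gam γ i k m u) +
          z * (kron i k * kron l j * (kron i m * kron l m))) := by
    intro m
    simp only [GamZ_apply, kron]
    split_ifs <;> subst_vars <;> first | contradiction | ring
  simp only [h, sum_add_distrib, ← mul_sum, sum_kron_mul]
  simp only [kron]
  split_ifs <;> subst_vars <;> first | contradiction | ring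

lemma kron_mul_Gam_add_kron_mul_Gam (i j k l : Fin N) (u : Fin N → ℂ) :
    kron i k * Gam γ i l j u + kron l j * Gam γ i k l u =
      kron i l * Gam γ i k j u + kron k j * Gam γ i l k u := by
  simp only [kron]
  split_ifs <;> subst_vars <;> first | contradiction | simp_all [Gam_diag, Gam_of_pairwise_ne]

lemma pder_GamZ (z : ℂ) (i j k l : Fin N) (u : Fin N → ℂ) :
    pder l (GamZ γ z i j k) u = pder l (Gam γ i j k) u :=
  pder_add_const _ _

lemma curvature_GamZ (z : ℂ) (i j k l : Fin N) (u : Fin N → ℂ) :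
    curvature (GamZ γ z) i j k l u = curvature (Gam γ) i j k l u := by
  simp only [curvature, pder_GamZ, sum_sub_distrib, sum_GamZ_mul_GamZ]
  linear_combination z * kron_mul_Gam_add_kron_mul_Gam (γ := γ) i j k l u

end GamZ

section Flat

variable {U : Set (Fin N → ℂ)} {γ : Fin N → Fin N → (Fin N → ℂ) → ℂ}
  {i j k l : Fin N} {u : Fin N → ℂ}

lemma StarSystem.pder_comm (hstar : StarSystem U γ) (hik : i ≠ k) (hil : i ≠ l) (hkl : k ≠ l)
    (hu : u ∈ U) : pder k (γ i l) u = pder l (γ i k) u := by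
  rw [hstar.1 i l k hil hkl.symm hik u hu, hstar.1 i k l hik hkl hil u hu]
  ring

lemma pder_Gam_self_self (hU : IsOpen U)
    (hhol : ∀ i j : Fin N, i ≠ j → DifferentiableOn ℂ (γ i j) U) (hstar : StarSystem U γ)
    (hil : i ≠ l) (hu : u ∈ U) : pder l (Gam γ i i i) u = pder i (γ i l) u := by
  have hdiff : ∀ m ∈ univ.erase i, DifferentiableAt ℂ (γ i m) u := fun m hm =>
    (hhol i m (ne_of_mem_erase hm).symm).differentiableAt (hU.mem_nhds hu)
  have hswap : ∑ m ∈ univ.erase i, pder l (γ i m) u = ∑ m ∈ univ.erase i, pder m (γ i l) u := by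
    refine sum_congr rfl fun m hm => ?_
    rcases eq_or_ne m l with rfl | hml
    · rfl
    · exact hstar.pder_comm hil (ne_of_mem_erase hm).symm hml.symm hu
  have htotal := hstar.2 i l hil u hu
  rw [← add_sum_erase _ _ (mem_univ i)] at htotal
  rw [Gam_self_self, pder_neg, pder_sum _ _ hdiff, hswap]
  linear_combination -htotal

lemma curvature_Gam_of_ne (hik : i ≠ k) (hil : i ≠ l) :
    curvature (Gam γ) i j k l u =
      pder k (Gam γ i l j) u - pder l (Gam γ i k j) u
        + γ i k u * (Gam γ i l j u - Gam γ k l j u)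
        - γ i l u * (Gam γ i k j u - Gam γ l k j u) := by
  rw [curvature, sum_sub_distrib, sum_Gam_mul_of_ne hik, sum_Gam_mul_of_ne hil]
  ring

lemma curvature_Gam_self_left (hil : i ≠ l) :
    curvature (Gam γ) i j i l u =
      pder i (Gam γ i l j) u - pder l (Gam γ i i j) u
        + ∑ m, γ i m u * (Gam γ m l j u - Gam γ i l j u)
        - γ i l u * (Gam γ i i j u - Gam γ l i j u) := by
  rw [curvature, sum_sub_distrib, sum_Gam_self_mul, sum_Gam_mul_of_ne hil]
  ring

lemma curvature_Gam_iikl (hstar : StarSystem U γ) (hik : i ≠ k) (hil : i ≠ l) (hkl : k ≠ l)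
    (hu : u ∈ U) : curvature (Gam γ) i i k l u = 0 := by
  rw [curvature_Gam_of_ne hik hil, Gam_self_right hil, Gam_self_right hik,
    Gam_of_pairwise_ne hkl hik.symm (Ne.symm hil), Gam_of_pairwise_ne hkl.symm hil.symm hik.symm,
    hstar.pder_comm hik hil hkl hu]
  simp only [Pi.zero_apply]
  ring

lemma curvature_Gam_ikkl (hstar : StarSystem U γ) (hik : i ≠ k) (hil : i ≠ l) (hkl : k ≠ l)
    (hu : u ∈ U) : curvature (Gam γ) i k k l u = 0 := by
  rw [curvature_Gam_of_ne hik hil, Gam_of_pairwise_ne hil hik hkl.symm, Gam_diag hik,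
    Gam_self_right hkl, Gam_diag hkl.symm, pder_zero, pder_neg, hstar.1 i k l hik hkl hil u hu]
  simp only [Pi.zero_apply]
  ring

lemma curvature_Gam_ijkl (hij : i ≠ j) (hik : i ≠ k) (hil : i ≠ l) (hkj : k ≠ j) (hkl : k ≠ l)
    (hlj : l ≠ j) : curvature (Gam γ) i j k l u = 0 := by
  rw [curvature_Gam_of_ne hik hil, Gam_of_pairwise_ne hil hij hlj, Gam_of_pairwise_ne hik hij hkj,
    Gam_of_pairwise_ne hkl hkj hlj, Gam_of_pairwise_ne hkl.symm hlj hkj, pder_zero, pder_zero]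
  simp only [Pi.zero_apply]
  ring

lemma curvature_Gam_iiil (hU : IsOpen U)
    (hhol : ∀ i j : Fin N, i ≠ j → DifferentiableOn ℂ (γ i j) U) (hstar : StarSystem U γ)
    (hil : i ≠ l) (hu : u ∈ U) : curvature (Gam γ) i i i l u = 0 := by
  rw [curvature_Gam_self_left hil, pder_Gam_self_self hU hhol hstar hil hu, Gam_self_right hil,
    Gam_diag hil.symm, Gam_self_self]
  have hsplit := add_sum_erase univ (fun m => γ i m u) (mem_univ i)
  simp only [mul_sub, sum_sub_distrib, sum_mul_Gam_of_ne hil.symm, ← sum_mul]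
  linear_combination γ i l u * hsplit

lemma curvature_Gam_ilil (hstar : StarSystem U γ) (hil : i ≠ l) (hu : u ∈ U) :
    curvature (Gam γ) i l i l u = 0 := by
  have hoff : ∑ m ∈ univ.erase l, γ i m u * (Gam γ m l l u - -γ i l u) =
      ∑ m ∈ univ.erase l, γ i m u * (γ i l u - γ m l u) :=
    sum_congr rfl fun m hm => by rw [Gam_diag (ne_of_mem_erase hm)]; ring
  have hstar_off : ∑ m ∈ univ.erase l,
      (pder m (γ i l) u + γ i m u * (γ i l u - γ m l u) - γ i l u * γ l m u) =
        pder i (γ i l) u - γ i l u * γ l i u := by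
    rw [sum_eq_single_of_mem i (mem_erase.2 ⟨hil, mem_univ i⟩)]
    · ring
    · intro m hm hmi
      rw [hstar.1 i l m hil (ne_of_mem_erase hm).symm hmi.symm u hu]
      ring
  have htotal := hstar.2 i l hil u hu
  rw [← add_sum_erase _ _ (mem_univ l)] at htotal
  rw [sum_sub_distrib, sum_add_distrib, ← mul_sum] at hstar_off
  rw [curvature_Gam_self_left hil, Gam_diag hil, Gam_self_left hil, Gam_self_right hil.symm,
    pder_neg, ← add_sum_erase _ _ (mem_univ l), hoff, Gam_self_self]
  linear_combination hstar_off - htotal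

lemma curvature_Gam_ijil (hstar : StarSystem U γ) (hij : i ≠ j) (hil : i ≠ l) (hlj : l ≠ j)
    (hu : u ∈ U) : curvature (Gam γ) i j i l u = 0 := by
  rw [curvature_Gam_self_left hil, Gam_of_pairwise_ne hil hij hlj, Gam_self_left hij,
    Gam_of_pairwise_ne hil.symm hlj hij, pder_zero, hstar.1 i j l hij hlj.symm hil u hu]
  simp only [Pi.zero_apply, sub_zero, sum_mul_Gam_of_ne hlj]
  ring

lemma curvature_Gam_self_left_eq_zero (hU : IsOpen U)
    (hhol : ∀ i j : Fin N, i ≠ j → DifferentiableOn ℂ (γ i j) U) (hstar : StarSystem U γ)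
    (hil : i ≠ l) (hu : u ∈ U) : curvature (Gam γ) i j i l u = 0 := by
  rcases eq_or_ne i j with rfl | hij
  · exact curvature_Gam_iiil hU hhol hstar hil hu
  rcases eq_or_ne l j with rfl | hlj
  · exact curvature_Gam_ilil hstar hil hu
  · exact curvature_Gam_ijil hstar hij hil hlj hu

theorem curvature_Gam_eq_zero (hU : IsOpen U)
    (hhol : ∀ i j : Fin N, i ≠ j → DifferentiableOn ℂ (γ i j) U) (hstar : StarSystem U γ)
    (i j k l : Fin N) (hu : u ∈ U) : curvature (Gam γ) i j k l u = 0 := by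
  have hself_left {j l : Fin N} (hil : i ≠ l) : curvature (Gam γ) i j i l u = 0 :=
    curvature_Gam_self_left_eq_zero hU hhol hstar hil hu
  rcases eq_or_ne k l with rfl | hkl
  · exact curvature_self _ _ _ _ _
  rcases eq_or_ne i k with rfl | hik
  · exact hself_left hkl
  rcases eq_or_ne i l with rfl | hil
  · rw [curvature_swap, hself_left hik, neg_zero]
  rcases eq_or_ne i j with rfl | hij
  · exact curvature_Gam_iikl hstar hik hil hkl hu
  rcases eq_or_ne k j with rfl | hkj
  · exact curvature_Gam_ikkl hstar hik hil hkl hu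
  rcases eq_or_ne l j with rfl | hlj
  · rw [curvature_swap, curvature_Gam_ikkl hstar hil hik hkl.symm hu, neg_zero]
  · exact curvature_Gam_ijkl hij hik hil hkj hkl hlj

end Flat

theorem statement2_general {N : ℕ} (U : Set (Fin N → ℂ)) (hU : IsOpen U)
    (γ : Fin N → Fin N → (Fin N → ℂ) → ℂ)
    (hhol : ∀ i j : Fin N, i ≠ j → DifferentiableOn ℂ (γ i j) U)
    (hstar : StarSystem U γ) :
    -- (i) torsionlessness
    (∀ (z : ℂ) (i j k : Fin N), ∀ u ∈ U, GamZ γ z i j k u = GamZ γ z i k j u) ∧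
    -- (ii) flatness
    (∀ (z : ℂ) (i j k l : Fin N), ∀ u ∈ U,
        pder k (GamZ γ z i l j) u - pder l (GamZ γ z i k j) u
          + ∑ m, (GamZ γ z i k m u * GamZ γ z m l j u - GamZ γ z i l m u * GamZ γ z m k j u)
        = 0) ∧
    -- (iii) the unit vector field is parallel: Σ_j Γ^i_{kj} = 0
    (∀ (i k : Fin N), ∀ u ∈ U, ∑ j, Gam γ i k j u = 0) := by
  refine ⟨fun z i j k u _ => ?_, fun z i j k l u hu => ?_, fun i k u _ => sum_Gam i k u⟩
  · rw [GamZ_apply, GamZ_apply, Gam_comm, mul_comm (kron i j)]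
  · exact (curvature_GamZ z i j k l u).trans (curvature_Gam_eq_zero hU hhol hstar i j k l hu)

/-- If `γ̃` solves (★) on `U`, then for every `z ∈ ℂ` the connection with
Christoffel symbols `Γ(z)^i_{jk} = Γ^i_{jk} + z δ^i_j δ^i_k` is torsionless and flat, and the
unit vector field `e = Σ_i ∂/∂u^i` is parallel. -/
theorem statement2 {N : ℕ} (hN : 2 ≤ N) (U : Set (Fin N → ℂ)) (hU : IsOpen U)
    (γ : Fin N → Fin N → (Fin N → ℂ) → ℂ)
    (hhol : ∀ i j : Fin N, i ≠ j → DifferentiableOn ℂ (γ i j) U)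
    (hstar : StarSystem U γ) :
    -- (i) torsionlessness
    (∀ (z : ℂ) (i j k : Fin N), ∀ u ∈ U, GamZ γ z i j k u = GamZ γ z i k j u) ∧
    -- (ii) flatness
    (∀ (z : ℂ) (i j k l : Fin N), ∀ u ∈ U,
        pder k (GamZ γ z i l j) u - pder l (GamZ γ z i k j) u
          + ∑ m, (GamZ γ z i k m u * GamZ γ z m l j u - GamZ γ z i l m u * GamZ γ z m k j u)
        = 0) ∧
    -- (iii) the unit vector field is parallel: Σ_j Γ^i_{kj} = 0
    (∀ (i k : Fin N), ∀ u ∈ U, ∑ j, Gam γ i k j u = 0) :=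
  statement2_general U hU γ hhol hstar

end
end

section
/- Let γ^i_j satisfy the Darboux–Egoroff system on a connected open set U ⊆ ℂ^N, and let (R_k)_{k≥0} and (R'_k)_{k≥0} be two sequences of holomorphic matrix-valued functions on U with R_0 = R'_0 = Id, both satisfying, for all k ≥ 1 and all indices i,j,l, ∂_l (R_{k−1})^i_j + Σ_{m=1}^N (R_{k−1})^i_m γ^m_j (δ_{lj} − δ_{lm}) = (R_k)^i_j (δ_{lj} − δ_{li}) (and the same equations for R'). Then there exist constant diagonal matrices D_1, D_2, … ∈ Mat_{N×N}(ℂ) such that, setting D_0 := Id, one has R'_k = Σ_{i=0}^k D_i R_{k−i} for all k ≥ 0; equivalently Id + Σ_{k≥1} R'_k z^k = (Id + Σ_{k≥1} D_k z^k)(Id + Σ_{k≥1} R_k z^k) as formal power series in z. -/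
noncomputable section

variable {N : ℕ}

/-- The Darboux–Egoroff system for the rotation coefficients `γ^i_j` (`i ≠ j`) on `U`. -/
def DarbouxEgoroff (U : Set (Fin N → ℂ)) (γ : Fin N → Fin N → (Fin N → ℂ) → ℂ) : Prop :=
  (∀ i j k : Fin N, i ≠ j → j ≠ k → i ≠ k → ∀ u ∈ U,
      pder k (γ i j) u = γ i k u * γ k j u) ∧
  (∀ i j : Fin N, i ≠ j → ∀ u ∈ U, ∑ k, pder k (γ i j) u = 0)

/-- The componentwise form of the matrix 1-form equations
`dR_{k−1} + R_{k−1}[Γ,dU] = [R_k,dU]` (for all `k ≥ 1`), where `U = diag(u^1,…,u^N)` and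
`[Γ,dU]^i_j = γ^i_j (du^j − du^i)`:
`∂_l (R_{k−1})^i_j + Σ_m (R_{k−1})^i_m γ^m_j (δ_{lj} − δ_{lm}) = (R_k)^i_j (δ_{lj} − δ_{li})`. -/
def RMatrixEqs (U : Set (Fin N → ℂ)) (γ : Fin N → Fin N → (Fin N → ℂ) → ℂ)
    (R : ℕ → Fin N → Fin N → (Fin N → ℂ) → ℂ) : Prop :=
  ∀ (k : ℕ) (i j l : Fin N), ∀ u ∈ U,
    pder l (R k i j) u + ∑ m, R k i m u * γ m j u * (kron l j - kron l m)
      = R (k + 1) i j u * (kron l j - kron l i)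

/-!
Left multiplication by a constant diagonal series `D(z)` preserves the `R`-matrix equations: the
only new term, `D_{k+1} R_0 = D_{k+1}`, commutes with `dU`. Conversely, an `R`-sequence is
determined level by level up to constants. The off-diagonal entries of `R_{k+1}` are read off from
the equation with `l = j`; the diagonal entries of `R_k` enter their own equations only through
the factor `δ_{li} − δ_{li} = 0`, so their partial derivatives are determined by the off-diagonal
entries, and on the connected set `U` they are fixed up to additive constants. Taking `D_ii` to be
the power series quotient `R'_ii(u₀) / R_ii(u₀)` at a base point `u₀` matches these constants, and
induction on `k` gives `R' = D R`.
-/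

open Finset

lemma pder_congr_of_eqOn {U : Set (Fin N → ℂ)} (hU : IsOpen U) {f g : (Fin N → ℂ) → ℂ}
    (h : Set.EqOn f g U) {u : Fin N → ℂ} (hu : u ∈ U) (l : Fin N) :
    pder l f u = pder l g u := by
  simp only [pder, (h.eventuallyEq_of_mem (hU.mem_nhds hu)).fderiv_eq]

lemma pder_sum_const_mul {ι : Type*} {s : Finset ι} {c : ι → ℂ} {f : ι → (Fin N → ℂ) → ℂ}
    {u : Fin N → ℂ} (hf : ∀ a ∈ s, DifferentiableAt ℂ (f a) u) (l : Fin N) :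
    pder l (fun u => ∑ a ∈ s, c a * f a u) u = ∑ a ∈ s, c a * pder l (f a) u := by
  simp only [pder]
  rw [fderiv_fun_sum fun a ha => (hf a ha).const_mul (c a), _root_.sum_apply]
  refine sum_congr rfl fun a ha => ?_
  rw [fderiv_const_mul (hf a ha), smul_apply, smul_eq_mul]

lemma fderiv_eq_of_pder_eq {f g : (Fin N → ℂ) → ℂ} {u : Fin N → ℂ}
    (h : ∀ l, pder l f u = pder l g u) : fderiv ℂ f u = fderiv ℂ g u := by
  refine ContinuousLinearMap.coe_injective (LinearMap.pi_ext fun l x => ?_)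
  have hx : (Pi.single l x : Fin N → ℂ) = x • Pi.single l 1 := by
    rw [← Pi.single_smul, smul_eq_mul, mul_one]
  have hl := h l
  simp only [pder] at hl
  simp only [ContinuousLinearMap.coe_coe, hx, map_smul, hl]

section SeriesQuotient

open PowerSeries

variable {K : Type*} [Field K]

lemma sum_range_coeff_mk_mul_inv_mul {f g : ℕ → K} (hg : g 0 ≠ 0) (k : ℕ) :
    ∑ a ∈ range (k + 1), coeff a (mk f * (mk g)⁻¹) * g (k - a) = f k := by
  have h : mk f * (mk g)⁻¹ * mk g = mk f := by
    rw [mul_assoc, PowerSeries.inv_mul_cancel _ (by simpa using hg), mul_one]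
  simpa [coeff_mul, Finset.Nat.sum_antidiagonal_eq_sum_range_succ_mk] using
    congrArg (coeff k) h

end SeriesQuotient

lemma kron_mul_sub_eq_zero (i j l : Fin N) : kron i j * (kron l j - kron l i) = 0 := by
  by_cases hij : i = j <;> simp [kron, hij]

def diagMul (d : ℕ → Fin N → ℂ) (R : ℕ → Fin N → Fin N → (Fin N → ℂ) → ℂ) :
    ℕ → Fin N → Fin N → (Fin N → ℂ) → ℂ :=
  fun k i j u => ∑ a ∈ range (k + 1), d a i * R (k - a) i j u

lemma diagMul_differentiableOn {U : Set (Fin N → ℂ)} {R : ℕ → Fin N → Fin N → (Fin N → ℂ) → ℂ}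
    (hR : ∀ k i j, DifferentiableOn ℂ (R k i j) U) (d : ℕ → Fin N → ℂ) (k : ℕ) (i j : Fin N) :
    DifferentiableOn ℂ (diagMul d R k i j) U :=
  DifferentiableOn.fun_sum fun a _ => (hR (k - a) i j).const_mul (d a i)

section Equations

variable {U : Set (Fin N → ℂ)} {γ : Fin N → Fin N → (Fin N → ℂ) → ℂ}
  {R R' : ℕ → Fin N → Fin N → (Fin N → ℂ) → ℂ}

namespace RMatrixEqs

lemma succ_apply_of_ne (hR : RMatrixEqs U γ R) (k : ℕ) {i j : Fin N} (hij : i ≠ j)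
    {u : Fin N → ℂ} (hu : u ∈ U) :
    R (k + 1) i j u = pder j (R k i j) u + ∑ m, R k i m u * γ m j u * (1 - kron j m) := by
  simpa [kron, Ne.symm hij] using (hR k i j j u hu).symm

lemma pder_diag (hR : RMatrixEqs U γ R) (k : ℕ) (i l : Fin N) {u : Fin N → ℂ} (hu : u ∈ U) :
    pder l (R k i i) u = -∑ m, R k i m u * γ m i u * (kron l i - kron l m) := by
  simpa [eq_neg_iff_add_eq_zero] using hR k i i l u hu

lemma eqOn_succ_of_ne (hU : IsOpen U) (hR : RMatrixEqs U γ R) (hR' : RMatrixEqs U γ R')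
    {k : ℕ} (h : ∀ i j, Set.EqOn (R k i j) (R' k i j) U) {i j : Fin N} (hij : i ≠ j) :
    Set.EqOn (R (k + 1) i j) (R' (k + 1) i j) U := by
  intro u hu
  rw [hR.succ_apply_of_ne k hij hu, hR'.succ_apply_of_ne k hij hu,
    pder_congr_of_eqOn hU (h i j) hu]
  simp only [h i _ hu]

lemma pder_diag_eq (hR : RMatrixEqs U γ R) (hR' : RMatrixEqs U γ R') {k : ℕ} {u : Fin N → ℂ}
    (hu : u ∈ U) (h : ∀ i j, i ≠ j → R k i j u = R' k i j u) (i l : Fin N) :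
    pder l (R k i i) u = pder l (R' k i i) u := by
  rw [hR.pder_diag k i l hu, hR'.pder_diag k i l hu]
  congr 1
  refine sum_congr rfl fun m _ => ?_
  rcases eq_or_ne i m with rfl | him
  · simp
  · rw [h i m him]

lemma eqOn_succ (hU : IsOpen U) (hU' : IsPreconnected U)
    (hR : RMatrixEqs U γ R) (hR' : RMatrixEqs U γ R') {k : ℕ}
    (hRd : ∀ i, DifferentiableOn ℂ (R (k + 1) i i) U)
    (hR'd : ∀ i, DifferentiableOn ℂ (R' (k + 1) i i) U)
    (h : ∀ i j, Set.EqOn (R k i j) (R' k i j) U) {u₀ : Fin N → ℂ} (hu₀ : u₀ ∈ U)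
    (h₀ : ∀ i, R (k + 1) i i u₀ = R' (k + 1) i i u₀) (i j : Fin N) :
    Set.EqOn (R (k + 1) i j) (R' (k + 1) i j) U := by
  rcases eq_or_ne i j with rfl | hij
  · have hoff : ∀ u ∈ U, ∀ i j, i ≠ j → R (k + 1) i j u = R' (k + 1) i j u :=
      fun u hu i j hij => hR.eqOn_succ_of_ne hU hR' h hij hu
    obtain ⟨c, hc⟩ := hU.exists_eq_add_of_fderiv_eq hU' (hRd i) (hR'd i) fun u hu =>
      fderiv_eq_of_pder_eq (hR.pder_diag_eq hR' hu (hoff u hu) i)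
    have hc0 : c = 0 := by simpa [h₀ i] using hc hu₀
    simpa [hc0] using hc
  · exact hR.eqOn_succ_of_ne hU hR' h hij

end RMatrixEqs

lemma rMatrixEqs_diagMul (hU : IsOpen U) (hR : RMatrixEqs U γ R)
    (hR0 : ∀ i j, ∀ u ∈ U, R 0 i j u = kron i j) (hRd : ∀ k i j, DifferentiableOn ℂ (R k i j) U)
    (d : ℕ → Fin N → ℂ) : RMatrixEqs U γ (diagMul d R) := by
  intro k i j l u hu
  have hpder : pder l (diagMul d R k i j) u
      = ∑ a ∈ range (k + 1), d a i * pder l (R (k - a) i j) u :=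
    pder_sum_const_mul (fun a _ => (hRd (k - a) i j).differentiableAt (hU.mem_nhds hu)) l
  have hsum : ∑ m, diagMul d R k i m u * γ m j u * (kron l j - kron l m)
      = ∑ a ∈ range (k + 1), d a i * ∑ m, R (k - a) i m u * γ m j u * (kron l j - kron l m) := by
    simp only [diagMul, sum_mul, mul_sum]
    rw [sum_comm]
    exact sum_congr rfl fun a _ => sum_congr rfl fun m _ => by ring
  have htop : diagMul d R (k + 1) i j u * (kron l j - kron l i)
      = ∑ a ∈ range (k + 1), d a i * R (k - a + 1) i j u * (kron l j - kron l i) := by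
    simp only [diagMul]
    rw [sum_range_succ, Nat.sub_self, hR0 i j u hu, add_mul, mul_assoc _ (kron i j),
      kron_mul_sub_eq_zero, mul_zero, add_zero, sum_mul]
    refine sum_congr rfl fun a ha => ?_
    rw [Nat.sub_add_comm (Nat.lt_succ_iff.mp (mem_range.mp ha))]
  rw [hpder, hsum, ← sum_add_distrib, htop]
  refine sum_congr rfl fun a _ => ?_
  rw [← mul_add, hR (k - a) i j l u hu, mul_assoc]

end Equations

theorem statement7_general {N : ℕ} (U : Set (Fin N → ℂ))
    (hU : IsOpen U) (hconn : IsConnected U)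
    (γ : Fin N → Fin N → (Fin N → ℂ) → ℂ)
    (R R' : ℕ → Fin N → Fin N → (Fin N → ℂ) → ℂ)
    (hR0 : ∀ i j : Fin N, ∀ u ∈ U, R 0 i j u = kron i j)
    (hR'0 : ∀ i j : Fin N, ∀ u ∈ U, R' 0 i j u = kron i j)
    (hRhol : ∀ (k : ℕ) (i j : Fin N), DifferentiableOn ℂ (R k i j) U)
    (hR'hol : ∀ (k : ℕ) (i j : Fin N), DifferentiableOn ℂ (R' k i j) U)
    (hReqs : RMatrixEqs U γ R) (hR'eqs : RMatrixEqs U γ R') :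
    ∃ D : ℕ → Matrix (Fin N) (Fin N) ℂ,
      D 0 = 1 ∧
      (∀ (k : ℕ) (i j : Fin N), i ≠ j → D k i j = 0) ∧
      (∀ (k : ℕ) (i j : Fin N), ∀ u ∈ U,
        R' k i j u = ∑ a ∈ Finset.range (k + 1), ∑ m, D a i m * R (k - a) m j u) := by
  obtain ⟨u₀, hu₀⟩ := hconn.nonempty
  set d : ℕ → Fin N → ℂ := fun a i => PowerSeries.coeff a
    (PowerSeries.mk (fun k => R' k i i u₀) * (PowerSeries.mk (fun k => R k i i u₀))⁻¹)
  have hquot (k : ℕ) (i : Fin N) : diagMul d R k i i u₀ = R' k i i u₀ :=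
    sum_range_coeff_mk_mul_inv_mul (by simp [hR0 i i u₀ hu₀, kron]) k
  have hd0 (i : Fin N) : d 0 i = 1 := by
    simpa [diagMul, hR0 i i u₀ hu₀, hR'0 i i u₀ hu₀, kron] using hquot 0 i
  have hS := rMatrixEqs_diagMul hU hReqs hR0 hRhol d
  have key (k : ℕ) (i j : Fin N) : Set.EqOn (diagMul d R k i j) (R' k i j) U := by
    induction k generalizing i j with
    | zero => intro u hu; simp [diagMul, hd0, hR0 i j u hu, hR'0 i j u hu]
    | succ k ih =>
      exact hS.eqOn_succ hU hconn.isPreconnected hR'eqs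
        (fun i => diagMul_differentiableOn hRhol d _ i i) (fun i => hR'hol _ i i) ih hu₀
        (hquot (k + 1)) i j
  refine ⟨fun a => Matrix.diagonal (d a), ?_, fun k i j hij => Matrix.diagonal_apply_ne _ hij,
    fun k i j u hu => ?_⟩
  · ext i j
    simp [Matrix.one_apply, Matrix.diagonal_apply, hd0]
  · simp [← key k i j hu, diagMul, Matrix.diagonal_apply]

/-- On a connected open set, two sequences of `R`-matrices for the same
solution of the Darboux–Egoroff system differ by the left multiplication by a power series
`Id + Σ_{k≥1} D_k z^k` with constant diagonal coefficients. -/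
theorem statement7 {N : ℕ} (hN : 2 ≤ N) (U : Set (Fin N → ℂ))
    (hU : IsOpen U) (hconn : IsConnected U)
    (γ : Fin N → Fin N → (Fin N → ℂ) → ℂ)
    (hdiag : ∀ i : Fin N, ∀ u, γ i i u = 0)
    (hhol : ∀ i j : Fin N, DifferentiableOn ℂ (γ i j) U)
    (hDE : DarbouxEgoroff U γ)
    (R R' : ℕ → Fin N → Fin N → (Fin N → ℂ) → ℂ)
    (hR0 : ∀ i j : Fin N, ∀ u ∈ U, R 0 i j u = kron i j)
    (hR'0 : ∀ i j : Fin N, ∀ u ∈ U, R' 0 i j u = kron i j)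
    (hRhol : ∀ (k : ℕ) (i j : Fin N), DifferentiableOn ℂ (R k i j) U)
    (hR'hol : ∀ (k : ℕ) (i j : Fin N), DifferentiableOn ℂ (R' k i j) U)
    (hReqs : RMatrixEqs U γ R) (hR'eqs : RMatrixEqs U γ R') :
    ∃ D : ℕ → Matrix (Fin N) (Fin N) ℂ,
      D 0 = 1 ∧
      (∀ (k : ℕ) (i j : Fin N), i ≠ j → D k i j = 0) ∧
      (∀ (k : ℕ) (i j : Fin N), ∀ u ∈ U,
        R' k i j u = ∑ a ∈ Finset.range (k + 1), ∑ m, D a i m * R (k - a) m j u) :=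
  statement7_general U hU hconn γ R R' hR0 hR'0 hRhol hR'hol hReqs hR'eqs

end
end

section
/- Under the stated assumptions: (1) for each i the function δ_i := −Σ_{j=1}^N u^j (D_j)^i_i is constant on U; (2) if H_1,…,H_N : U → ℂ are nonvanishing holomorphic functions with ∂_j H_i = −(D_j)^i_i H_i for all i,j, then Σ_{j=1}^N u^j ∂_j H_i = δ_i H_i for all i, and the functions γ^i_j := H_i γ̃^i_j H_j^{−1} (i ≠ j) satisfy Σ_{k=1}^N u^k ∂_k γ^i_j = (δ_i − δ_j − 1) γ^i_j. -/
/-!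
Write `E = Σ_l u^l ∂_l` for the Euler field. Flatness turns `∂_k B + [B, M_k] = 0` into
`E(M_k) = -M_k`; reading off the `(i, j)` entry of `M_j`, which is `γ̃^i_j` for `i ≠ j`, shows
that `γ̃^i_j` is homogeneous of degree `-1`. The diagonal of `[B, M_k]` vanishes, so
`B^i_i = Σ_j u^j (D_j)^i_i` has vanishing derivatives and is constant on the connected set `U`.
The equation for `H_i` then reads `E(H_i) = δ_i H_i`, and since `E` is a derivation,
`E(H_i γ̃^i_j / H_j) = (δ_i - 1 - δ_j) H_i γ̃^i_j / H_j`.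
-/

noncomputable section

variable {N : ℕ}

/-- The matrices `M_k` with `(M_k)^i_j = (D_k)^i_j + γ̃^i_j (δ_{kj} − δ_{ki})`, where `D_k` is
diagonal with entries `D k i` and `γ̃` has vanishing diagonal. -/
def Mmat (D : Fin N → Fin N → (Fin N → ℂ) → ℂ) (γ : Fin N → Fin N → (Fin N → ℂ) → ℂ)
    (k i j : Fin N) : (Fin N → ℂ) → ℂ :=
  fun u => (if i = j then D k i u else 0) + γ i j u * (kron k j - kron k i)

/-- The matrix `B = Σ_i u^i M_i` (the canonical-coordinate form of `i_E M`). -/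
def Bmat (D : Fin N → Fin N → (Fin N → ℂ) → ℂ) (γ : Fin N → Fin N → (Fin N → ℂ) → ℂ)
    (i j : Fin N) : (Fin N → ℂ) → ℂ :=
  fun u => ∑ k, u k * Mmat D γ k i j u

open Finset

def euler (f : (Fin N → ℂ) → ℂ) (u : Fin N → ℂ) : ℂ := ∑ k, u k * pder k f u

section Calculus

variable {f g h : (Fin N → ℂ) → ℂ} {u : Fin N → ℂ}

lemma pder_mul (hf : DifferentiableAt ℂ f u) (hg : DifferentiableAt ℂ g u) (k : Fin N) :
    pder k (fun w => f w * g w) u = f u * pder k g u + g u * pder k f u := by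
  simp [pder, fderiv_fun_mul hf hg]

lemma pder_inv (hh : DifferentiableAt ℂ h u) (hu : h u ≠ 0) (k : Fin N) :
    pder k (fun w => (h w)⁻¹) u = -pder k h u / h u ^ 2 := by
  have := ((hasDerivAt_inv hu).comp_hasFDerivAt u hh.hasFDerivAt).fderiv
  simp only [pder, Function.comp_def] at this ⊢
  rw [this]
  simp [div_eq_mul_inv, mul_comm]

lemma pder_sum_coord_mul {f : Fin N → (Fin N → ℂ) → ℂ} (hf : ∀ l, DifferentiableAt ℂ (f l) u)
    (k : Fin N) :
    pder k (fun w => ∑ l, w l * f l w) u = f k u + ∑ l, u l * pder k (f l) u := by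
  have hcoord : ∀ l, DifferentiableAt ℂ (fun w : Fin N → ℂ => w l) u := fun l => by fun_prop
  simp only [pder]
  rw [fderiv_fun_sum (A := fun l w => w l * f l w) fun l _ => (hcoord l).mul (hf l),
    _root_.sum_apply]
  change ∑ l, pder k (fun w => w l * f l w) u = _
  simp only [pder_mul (hcoord _) (hf _), sum_add_distrib]
  simp [pder, (hasFDerivAt_apply _ u).fderiv, Pi.single_apply, add_comm]

lemma euler_mul (hf : DifferentiableAt ℂ f u) (hg : DifferentiableAt ℂ g u) :
    euler (fun w => f w * g w) u = f u * euler g u + g u * euler f u := by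
  simp only [euler, pder_mul hf hg, mul_sum, ← sum_add_distrib]
  exact sum_congr rfl fun _ _ => by ring

lemma euler_inv (hh : DifferentiableAt ℂ h u) (hu : h u ≠ 0) :
    euler (fun w => (h w)⁻¹) u = -euler h u / h u ^ 2 := by
  simp only [euler, pder_inv hh hu, neg_div, sum_div, ← sum_neg_distrib, mul_neg, mul_div_assoc]

lemma euler_mul_div {a b c : ℂ} (hf : DifferentiableAt ℂ f u) (hg : DifferentiableAt ℂ g u)
    (hh : DifferentiableAt ℂ h u) (hu : h u ≠ 0) (hfa : euler f u = a * f u)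
    (hgb : euler g u = b * g u) (hhc : euler h u = c * h u) :
    euler (fun w => f w * g w / h w) u = (a + b - c) * (f u * g u / h u) := by
  simp only [div_eq_mul_inv]
  rw [euler_mul (f := fun w => f w * g w) (g := fun w => (h w)⁻¹) (hf.mul hg) (hh.inv hu),
    euler_inv hh hu, euler_mul hf hg, hfa, hgb, hhc]
  field_simp
  ring

end Calculus

lemma fderiv_eq_zero_of_pder_eq_zero {f : (Fin N → ℂ) → ℂ} {u : Fin N → ℂ}
    (h : ∀ k, pder k f u = 0) : fderiv ℂ f u = 0 := by
  refine ContinuousLinearMap.coe_injective (LinearMap.pi_ext fun k x => ?_)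
  have hx : (Pi.single k x : Fin N → ℂ) = x • Pi.single k 1 := by
    rw [← Pi.single_smul', smul_eq_mul, mul_one]
  simp [hx, show fderiv ℂ f u (Pi.single k 1) = 0 from h k]

lemma exists_const_of_pder_eq_zero {U : Set (Fin N → ℂ)} (hU : IsOpen U) (hU' : IsPreconnected U)
    {f : (Fin N → ℂ) → ℂ} (hf : DifferentiableOn ℂ f U) (h : ∀ u ∈ U, ∀ k, pder k f u = 0) :
    ∃ a, ∀ u ∈ U, f u = a :=
  hU.exists_is_const_of_fderiv_eq_zero hU' hf fun u hu => fderiv_eq_zero_of_pder_eq_zero (h u hu)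

section Flatness

variable {M : Fin N → Fin N → Fin N → (Fin N → ℂ) → ℂ} {u : Fin N → ℂ}

lemma sum_mul_commutator (k i j : Fin N) :
    ∑ l, u l * ∑ m, (M k i m u * M l m j u - M l i m u * M k m j u)
      = ∑ m, (M k i m u * ∑ l, u l * M l m j u - (∑ l, u l * M l i m u) * M k m j u) := by
  simp only [mul_sum, sum_mul, ← sum_sub_distrib]
  rw [sum_comm]
  exact sum_congr rfl fun _ _ => sum_congr rfl fun _ _ => by ring

/-- Flatness gives `∂_k B = M_k + E(M_k) + [M_k, B]`, so the equation `∂_k B + [B, M_k] = 0`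
says exactly that `M_k` is homogeneous of degree `-1`. -/
lemma euler_eq_neg_of_flat (k i j : Fin N) (hM : ∀ l, DifferentiableAt ℂ (M l i j) u)
    (hflat : ∀ l, pder k (M l i j) u - pder l (M k i j) u
        = ∑ m, (M k i m u * M l m j u - M l i m u * M k m j u))
    (hB : pder k (fun w => ∑ l, w l * M l i j w) u
        + ∑ m, ((∑ l, u l * M l i m u) * M k m j u - M k i m u * ∑ l, u l * M l m j u) = 0) :
    euler (M k i j) u = -M k i j u := by
  have hpB : ∑ l, u l * pder k (M l i j) u
      = euler (M k i j) u + ∑ l, u l * ∑ m, (M k i m u * M l m j u - M l i m u * M k m j u) := by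
    simp only [euler, ← sum_add_distrib, ← mul_add, ← sub_eq_iff_eq_add'.mp (hflat _)]
  have hcomm : ∑ m, (M k i m u * ∑ l, u l * M l m j u - (∑ l, u l * M l i m u) * M k m j u)
      + ∑ m, ((∑ l, u l * M l i m u) * M k m j u - M k i m u * ∑ l, u l * M l m j u) = 0 := by
    rw [← sum_add_distrib]
    exact Finset.sum_eq_zero fun _ _ => by ring
  rw [pder_sum_coord_mul hM, hpB, sum_mul_commutator] at hB
  linear_combination hB - hcomm

end Flatness

section Canonical

variable {D γ : Fin N → Fin N → (Fin N → ℂ) → ℂ} {u : Fin N → ℂ}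

lemma Mmat_diag (k i : Fin N) : Mmat D γ k i i = D k i := by
  funext u; simp [Mmat]

lemma Mmat_of_ne {i j : Fin N} (h : i ≠ j) (k : Fin N) (u : Fin N → ℂ) :
    Mmat D γ k i j u = γ i j u * (kron k j - kron k i) := by
  simp [Mmat, h]

lemma Mmat_col_of_ne {i j : Fin N} (h : i ≠ j) : Mmat D γ j i j = γ i j := by
  funext u; simp [Mmat_of_ne h, kron, Ne.symm h]

lemma Bmat_diag (i : Fin N) : Bmat D γ i i = fun w => ∑ l, w l * D l i w := by
  funext u; simp [Bmat, Mmat_diag]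

lemma Bmat_of_ne {i j : Fin N} (h : i ≠ j) (u : Fin N → ℂ) :
    Bmat D γ i j u = γ i j u * (u j - u i) := by
  simp [Bmat, Mmat_of_ne h, kron, mul_sub, sum_sub_distrib]
  ring

lemma differentiableAt_Mmat {k i j : Fin N} (hD : DifferentiableAt ℂ (D k i) u)
    (hγ : DifferentiableAt ℂ (γ i j) u) : DifferentiableAt ℂ (Mmat D γ k i j) u := by
  rcases eq_or_ne i j with rfl | h
  · rwa [Mmat_diag]
  · rw [show Mmat D γ k i j = fun w => γ i j w * (kron k j - kron k i) from funext (Mmat_of_ne h k)]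
    fun_prop

lemma commutator_Bmat_Mmat_diag (k i : Fin N) (u : Fin N → ℂ) :
    ∑ m, (Bmat D γ i m u * Mmat D γ k m i u - Mmat D γ k i m u * Bmat D γ m i u) = 0 := by
  refine Finset.sum_eq_zero fun m _ => ?_
  rcases eq_or_ne i m with rfl | h
  · exact sub_eq_zero.mpr (mul_comm _ _)
  · rw [Bmat_of_ne h, Bmat_of_ne h.symm, Mmat_of_ne h, Mmat_of_ne h.symm]
    ring

end Canonical

theorem statement9_general {N : ℕ} (U : Set (Fin N → ℂ))
    (hU : IsOpen U) (hconn : IsConnected U)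
    (D : Fin N → Fin N → (Fin N → ℂ) → ℂ)
    (γ : Fin N → Fin N → (Fin N → ℂ) → ℂ)
    (hDhol : ∀ k i : Fin N, DifferentiableOn ℂ (D k i) U)
    (hγhol : ∀ i j : Fin N, DifferentiableOn ℂ (γ i j) U)
    -- flatness: ∂_k M_l − ∂_l M_k = M_k M_l − M_l M_k
    (hflat : ∀ k l i j : Fin N, ∀ u ∈ U,
        pder k (Mmat D γ l i j) u - pder l (Mmat D γ k i j) u
          = ∑ m, (Mmat D γ k i m u * Mmat D γ l m j u
              - Mmat D γ l i m u * Mmat D γ k m j u))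
    -- homogeneity: ∂_k B + B M_k − M_k B = 0
    (hB : ∀ k i j : Fin N, ∀ u ∈ U,
        pder k (Bmat D γ i j) u
          + ∑ m, (Bmat D γ i m u * Mmat D γ k m j u - Mmat D γ k i m u * Bmat D γ m j u)
          = 0) :
    ∃ δ : Fin N → ℂ,
      -- (1) δ_i = −Σ_j u^j (D_j)^i_i is constant on U
      (∀ i : Fin N, ∀ u ∈ U, -∑ j, u j * D j i u = δ i) ∧
      -- (2) properties of H and of the rotation coefficients
      (∀ H : Fin N → (Fin N → ℂ) → ℂ,
        (∀ i : Fin N, DifferentiableOn ℂ (H i) U) →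
        (∀ i : Fin N, ∀ u ∈ U, H i u ≠ 0) →
        (∀ i j : Fin N, ∀ u ∈ U, pder j (H i) u = -(D j i u) * H i u) →
        ((∀ i : Fin N, ∀ u ∈ U, ∑ j, u j * pder j (H i) u = δ i * H i u) ∧
         (∀ i j : Fin N, i ≠ j → ∀ u ∈ U,
            ∑ k, u k * pder k (fun w => H i w * γ i j w / H j w) u
              = (δ i - δ j - 1) * (H i u * γ i j u / H j u)))) := by
  have hDd : ∀ k i, ∀ u ∈ U, DifferentiableAt ℂ (D k i) u :=
    fun k i u hu => (hDhol k i).differentiableAt (hU.mem_nhds hu)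
  have hγd : ∀ i j, ∀ u ∈ U, DifferentiableAt ℂ (γ i j) u :=
    fun i j u hu => (hγhol i j).differentiableAt (hU.mem_nhds hu)
  have hBdiag : ∀ i, ∀ u ∈ U, ∀ k, pder k (fun w => ∑ l, w l * D l i w) u = 0 := by
    intro i u hu k
    have h := hB k i i u hu
    rwa [commutator_Bmat_Mmat_diag, add_zero, Bmat_diag] at h
  choose a ha using fun i => exists_const_of_pder_eq_zero hU hconn.isPreconnected
    (f := fun w => ∑ l, w l * D l i w)
    (DifferentiableOn.fun_sum fun l _ => (differentiableOn_apply l U).mul (hDhol l i)) (hBdiag i)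
  refine ⟨fun i => -a i, fun i u hu => by rw [ha i u hu], fun H hHhol hHne hHder => ?_⟩
  have hHd : ∀ i, ∀ u ∈ U, DifferentiableAt ℂ (H i) u :=
    fun i u hu => (hHhol i).differentiableAt (hU.mem_nhds hu)
  have hHE : ∀ i, ∀ u ∈ U, euler (H i) u = -a i * H i u := fun i u hu => by
    simp only [euler, hHder i _ u hu, ← ha i u hu, sum_mul, neg_mul, ← sum_neg_distrib]
    exact sum_congr rfl fun _ _ => by ring
  refine ⟨hHE, fun i j hij u hu => ?_⟩
  have hγE : euler (γ i j) u = -1 * γ i j u := by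
    rw [neg_one_mul, ← Mmat_col_of_ne (D := D) (γ := γ) hij]
    exact euler_eq_neg_of_flat j i j (fun l => differentiableAt_Mmat (hDd l i u hu) (hγd i j u hu))
      (fun l => hflat j l i j u hu) (hB j i j u hu)
  refine (euler_mul_div (hHd i u hu) (hγd i j u hu) (hHd j u hu) (hHne j u hu) (hHE i u hu) hγE
    (hHE j u hu)).trans ?_
  ring

/-- Under the flatness equations for `M = D̃ + [Γ̃,dU]` and the homogeneity
equations `∂_k B + B M_k − M_k B = 0` for `B = Σ_i u^i M_i`:
(1) each `δ_i := −Σ_j u^j (D_j)^i_i` is constant on `U`;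
(2) for nonvanishing `H_i` with `∂_j H_i = −(D_j)^i_i H_i` one has the Euler homogeneity
`Σ_j u^j ∂_j H_i = δ_i H_i`, and the rotation coefficients `γ^i_j = H_i γ̃^i_j H_j^{−1}`
satisfy `Σ_k u^k ∂_k γ^i_j = (δ_i − δ_j − 1) γ^i_j`. -/
theorem statement9 {N : ℕ} (hN : 2 ≤ N) (U : Set (Fin N → ℂ))
    (hU : IsOpen U) (hconn : IsConnected U)
    (D : Fin N → Fin N → (Fin N → ℂ) → ℂ)
    (γ : Fin N → Fin N → (Fin N → ℂ) → ℂ)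
    (hDhol : ∀ k i : Fin N, DifferentiableOn ℂ (D k i) U)
    (hγhol : ∀ i j : Fin N, DifferentiableOn ℂ (γ i j) U)
    (hγdiag : ∀ i : Fin N, ∀ u, γ i i u = 0)
    -- flatness: ∂_k M_l − ∂_l M_k = M_k M_l − M_l M_k
    (hflat : ∀ k l i j : Fin N, ∀ u ∈ U,
        pder k (Mmat D γ l i j) u - pder l (Mmat D γ k i j) u
          = ∑ m, (Mmat D γ k i m u * Mmat D γ l m j u
              - Mmat D γ l i m u * Mmat D γ k m j u))
    -- homogeneity: ∂_k B + B M_k − M_k B = 0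
    (hB : ∀ k i j : Fin N, ∀ u ∈ U,
        pder k (Bmat D γ i j) u
          + ∑ m, (Bmat D γ i m u * Mmat D γ k m j u - Mmat D γ k i m u * Bmat D γ m j u)
          = 0) :
    ∃ δ : Fin N → ℂ,
      -- (1) δ_i = −Σ_j u^j (D_j)^i_i is constant on U
      (∀ i : Fin N, ∀ u ∈ U, -∑ j, u j * D j i u = δ i) ∧
      -- (2) properties of H and of the rotation coefficients
      (∀ H : Fin N → (Fin N → ℂ) → ℂ,
        (∀ i : Fin N, DifferentiableOn ℂ (H i) U) →
        (∀ i : Fin N, ∀ u ∈ U, H i u ≠ 0) →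
        (∀ i j : Fin N, ∀ u ∈ U, pder j (H i) u = -(D j i u) * H i u) →
        ((∀ i : Fin N, ∀ u ∈ U, ∑ j, u j * pder j (H i) u = δ i * H i u) ∧
         (∀ i j : Fin N, i ≠ j → ∀ u ∈ U,
            ∑ k, u k * pder k (fun w => H i w * γ i j w / H j w) u
              = (δ i - δ j - 1) * (H i u * γ i j u / H j u)))) :=
  statement9_general U hU hconn D γ hDhol hγhol hflat hB
end
end

section
/- Let N ≥ 1 and let M_1,…,M_N ∈ Mat_{N×N}(ℂ) satisfy (M_k)^i_j (δ_{lj} − δ_{li}) = (M_l)^i_j (δ_{kj} − δ_{ki}) for all indices i,j,k,l (this is the componentwise form of the 1-form identity M ∧ dU + dU ∧ M = 0 for M = Σ_k M_k du^k and U = diag(u^1,…,u^N)). Then there exist unique diagonal matrices D_1,…,D_N ∈ Mat_{N×N}(ℂ) and unique scalars γ̃^i_j ∈ ℂ (i ≠ j) such that (M_k)^i_j = (D_k)^i_j + γ̃^i_j (δ_{kj} − δ_{ki}) for all i,j,k; that is, M = D̃ + [Γ̃, dU] with D̃ a diagonal matrix of 1-forms and Γ̃ a matrix with vanishing diagonal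 entries. -/
/-!
Decomposition `M = D̃ + [Γ̃, dU]` of a matrix of 1-forms anticommuting with `dU`
(Proposition 1.3, part 1, of Arsie–Buryak–Lorenzoni–Rossi,
"Semisimple flat F-manifolds in higher genus").
-/

noncomputable section

variable {N : ℕ}

/-- If the matrices `M_1,…,M_N` (the `du^k`-components of a matrix of
1-forms `M`) satisfy the componentwise form of `M ∧ dU + dU ∧ M = 0`, then `M` decomposes
uniquely as `M = D̃ + [Γ̃, dU]` with `D̃` a diagonal matrix of 1-forms and `Γ̃` a matrix with
vanishing diagonal entries. -/
theorem statement10 {N : ℕ} (hN : 1 ≤ N) (M : Fin N → Matrix (Fin N) (Fin N) ℂ)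
    (hM : ∀ i j k l : Fin N,
        M k i j * (kron l j - kron l i) = M l i j * (kron k j - kron k i)) :
    ∃ (D : Fin N → Matrix (Fin N) (Fin N) ℂ) (γ : Fin N → Fin N → ℂ),
      (∀ k i j : Fin N, i ≠ j → D k i j = 0) ∧
      (∀ k i j : Fin N, M k i j = D k i j + γ i j * (kron k j - kron k i)) ∧
      ∀ (D' : Fin N → Matrix (Fin N) (Fin N) ℂ) (γ' : Fin N → Fin N → ℂ),
        (∀ k i j : Fin N, i ≠ j → D' k i j = 0) →
        (∀ k i j : Fin N, M k i j = D' k i j + γ' i j * (kron k j - kron k i)) →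
        (D' = D ∧ ∀ i j : Fin N, i ≠ j → γ' i j = γ i j) := by
  refine ⟨fun k => Matrix.of fun i j => if i = j then M k i j else 0,
    fun i j => if i = j then 0 else M j i j, ?_, ?_, ?_⟩
  · intro k i j hij
    simp [Matrix.of_apply, hij]
  · intro k i j
    by_cases h : i = j
    · subst h; simp [kron]
    · have := hM i j k j
      simp [kron, h, Ne.symm h] at this ⊢
      exact this
  · intro D' γ' hD' hEq
    constructor
    · funext k i j
      by_cases h : i = j
      · subst h
        have h1 := hEq k i i
        simp [kron] at h1
        simp [Matrix.of_apply, h1]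
      · simp [Matrix.of_apply, hD' k i j h, h]
    · intro i j hij
      have h1 := hEq j i j
      simp [kron, hij, Ne.symm hij, hD' j i j hij] at h1
      simp [hij, h1]


end
end

section
/- Let γ̃^i_j satisfy (★) on an open set U ⊆ ℂ^N and let H_1,…,H_N : U → ℂ be nonvanishing holomorphic functions with ∂_j H_i = γ̃^i_j H_i for all j ≠ i and ∂_i H_i = −(Σ_{k≠i} γ̃^i_k) H_i. Then the rotation coefficients γ^i_j := H_i γ̃^i_j H_j^{−1} (i ≠ j) satisfy the Darboux–Egoroff system: ∂_k γ^i_j = γ^i_k γ^k_j for pairwise distinct i,j,k and Σ_{k=1}^N ∂_k γ^i_j = 0 for all i ≠ j; moreover ∂_j H_i = γ^i_j H_j for j ≠ i and ∂_i H_i = −Σ_{k≠i} γ^i_k H_k. -/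
noncomputable section

variable {N : ℕ}

/-!
On `U` the vector field `e = ∑ₖ ∂ₖ` kills `γ̃^i_j` by (★) and kills `H_i` because the diagonal
equation for `H_i` is minus the sum of the off-diagonal ones; being a derivation, `e` then kills
`γ^i_j = H_i γ̃^i_j / H_j`. For `k ∉ {i, j}` the logarithmic derivative
`∂ₖ γ^i_j = (H_i / H_j) (∂ₖ γ̃^i_j + γ̃^i_j (γ̃^i_k - γ̃^j_k))`
combined with (★) leaves `(H_i / H_j) γ̃^i_k γ̃^k_j = γ^i_k γ^k_j`.
-/

section DirectionalDerivative

variable {𝕜 E : Type*} [NontriviallyNormedField 𝕜] [NormedAddCommGroup E] [NormedSpace 𝕜 E]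

theorem fderiv_fun_mul_apply {f g : E → 𝕜} {u : E} (hf : DifferentiableAt 𝕜 f u)
    (hg : DifferentiableAt 𝕜 g u) (v : E) :
    fderiv 𝕜 (fun w => f w * g w) u v = fderiv 𝕜 f u v * g u + f u * fderiv 𝕜 g u v := by
  rw [fderiv_fun_mul hf hg]
  simp [add_comm, mul_comm]

theorem fderiv_fun_div_apply {f g : E → 𝕜} {u : E} (hf : DifferentiableAt 𝕜 f u)
    (hg : DifferentiableAt 𝕜 g u) (hgu : g u ≠ 0) (v : E) :
    fderiv 𝕜 (fun w => f w / g w) u v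
      = (fderiv 𝕜 f u v * g u - f u * fderiv 𝕜 g u v) / g u ^ 2 := by
  have hinv : HasFDerivAt (fun w => (g w)⁻¹)
      ((ContinuousLinearMap.toSpanSingleton 𝕜 (-(g u ^ 2)⁻¹)).comp (fderiv 𝕜 g u)) u :=
    (hasFDerivAt_inv hgu).comp u hg.hasFDerivAt
  simp only [div_eq_mul_inv]
  rw [(hf.hasFDerivAt.fun_mul hinv).fderiv]
  simp only [add_apply, smul_apply, ContinuousLinearMap.comp_apply,
    ContinuousLinearMap.toSpanSingleton_apply, smul_eq_mul, mul_neg]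
  field_simp
  ring

theorem fderiv_fun_mul_div_apply {a b c : E → 𝕜} {u : E} (ha : DifferentiableAt 𝕜 a u)
    (hb : DifferentiableAt 𝕜 b u) (hc : DifferentiableAt 𝕜 c u) (hau : a u ≠ 0)
    (hcu : c u ≠ 0) (v : E) :
    fderiv 𝕜 (fun w => a w * b w / c w) u v
      = a u / c u * (fderiv 𝕜 b u v + b u * (fderiv 𝕜 a u v / a u - fderiv 𝕜 c u v / c u)) := by
  rw [fderiv_fun_div_apply (f := fun w => a w * b w) (ha.mul hb) hc hcu,
    fderiv_fun_mul_apply ha hb]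
  field_simp
  ring

end DirectionalDerivative

theorem sum_pder_eq_fderiv_one (f : (Fin N → ℂ) → ℂ) (u : Fin N → ℂ) :
    ∑ k, pder k f u = fderiv ℂ f u 1 := by
  simp only [pder, ← map_sum, Finset.univ_sum_single (fun _ => (1 : ℂ))]
  rfl

theorem sum_pder_eq_zero_of_pder_eq_mul {h : (Fin N → ℂ) → ℂ} {c : Fin N → ℂ} {i : Fin N}
    {u : Fin N → ℂ} (hoff : ∀ k, k ≠ i → pder k h u = c k * h u)
    (hdiag : pder i h u = -(∑ k ∈ Finset.univ.erase i, c k) * h u) :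
    ∑ k, pder k h u = 0 := by
  rw [← Finset.add_sum_erase _ _ (Finset.mem_univ i), hdiag,
    Finset.sum_congr rfl fun k hk => hoff k (Finset.ne_of_mem_erase hk), ← Finset.sum_mul]
  ring

theorem statement12_general {N : ℕ} (U : Set (Fin N → ℂ)) (hU : IsOpen U)
    (γ : Fin N → Fin N → (Fin N → ℂ) → ℂ)
    (hhol : ∀ i j : Fin N, i ≠ j → DifferentiableOn ℂ (γ i j) U)
    (hstar : StarSystem U γ)
    (H : Fin N → (Fin N → ℂ) → ℂ)
    (hHhol : ∀ i : Fin N, DifferentiableOn ℂ (H i) U)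
    (hHne : ∀ i : Fin N, ∀ u ∈ U, H i u ≠ 0)
    (hHoff : ∀ i j : Fin N, j ≠ i → ∀ u ∈ U, pder j (H i) u = γ i j u * H i u)
    (hHdiag : ∀ i : Fin N, ∀ u ∈ U,
        pder i (H i) u = -(∑ k ∈ Finset.univ.erase i, γ i k u) * H i u) :
    -- Darboux–Egoroff system for the rotation coefficients γ^i_j = H_i γ̃^i_j H_j^{−1}
    (∀ i j k : Fin N, i ≠ j → j ≠ k → i ≠ k → ∀ u ∈ U,
        pder k (fun w => H i w * γ i j w / H j w) u
          = (H i u * γ i k u / H k u) * (H k u * γ k j u / H j u)) ∧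
    (∀ i j : Fin N, i ≠ j → ∀ u ∈ U,
        ∑ k, pder k (fun w => H i w * γ i j w / H j w) u = 0) ∧
    -- the system for H in terms of the rotation coefficients
    (∀ i j : Fin N, j ≠ i → ∀ u ∈ U,
        pder j (H i) u = (H i u * γ i j u / H j u) * H j u) ∧
    (∀ i : Fin N, ∀ u ∈ U,
        pder i (H i) u = -∑ k ∈ Finset.univ.erase i, (H i u * γ i k u / H k u) * H k u) := by
  have hdiff : ∀ f : (Fin N → ℂ) → ℂ, DifferentiableOn ℂ f U →
      ∀ u ∈ U, DifferentiableAt ℂ f u :=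
    fun f hf u hu => hf.differentiableAt (hU.mem_nhds hu)
  have hrot : ∀ i j, i ≠ j → ∀ u ∈ U, ∀ v, fderiv ℂ (fun w => H i w * γ i j w / H j w) u v
      = H i u / H j u * (fderiv ℂ (γ i j) u v
          + γ i j u * (fderiv ℂ (H i) u v / H i u - fderiv ℂ (H j) u v / H j u)) :=
    fun i j hij u hu => fderiv_fun_mul_div_apply (hdiff _ (hHhol i) u hu)
      (hdiff _ (hhol i j hij) u hu) (hdiff _ (hHhol j) u hu) (hHne i u hu) (hHne j u hu)
  have hsumH : ∀ i, ∀ u ∈ U, ∑ k, pder k (H i) u = 0 := fun i u hu =>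
    sum_pder_eq_zero_of_pder_eq_mul (fun k hk => hHoff i k hk u hu) (hHdiag i u hu)
  have hcancel : ∀ u ∈ U, ∀ i k, H i u * γ i k u / H k u * H k u = γ i k u * H i u :=
    fun u hu i k => by rw [div_mul_cancel₀ _ (hHne k u hu), mul_comm]
  refine ⟨fun i j k hij hjk hik u hu => ?_, fun i j hij u hu => ?_,
    fun i j hji u hu => by rw [hcancel u hu, hHoff i j hji u hu],
    fun i u hu => by simp only [hHdiag i u hu, hcancel u hu, Finset.sum_mul, neg_mul]⟩
  · have hHi := hHne i u hu
    have hHj := hHne j u hu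
    have hHk := hHne k u hu
    rw [pder, hrot i j hij u hu, ← pder, ← pder, ← pder, hstar.1 i j k hij hjk hik u hu,
      hHoff i k (Ne.symm hik) u hu, hHoff j k (Ne.symm hjk) u hu]
    field_simp
    ring
  · rw [sum_pder_eq_fderiv_one, hrot i j hij u hu, ← sum_pder_eq_fderiv_one,
      ← sum_pder_eq_fderiv_one, ← sum_pder_eq_fderiv_one, hstar.2 i j hij u hu, hsumH i u hu,
      hsumH j u hu]
    simp

/-- If `γ̃` solves (★) on `U` and the nonvanishing holomorphic functions
`H_i` satisfy `∂_j H_i = γ̃^i_j H_i` (`j ≠ i`) and `∂_i H_i = −(Σ_{k≠i} γ̃^i_k) H_i`, then the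
rotation coefficients `γ^i_j := H_i γ̃^i_j H_j^{−1}` satisfy the Darboux–Egoroff system, and
moreover `∂_j H_i = γ^i_j H_j` for `j ≠ i` and `∂_i H_i = −Σ_{k≠i} γ^i_k H_k`. -/
theorem statement12 {N : ℕ} (hN : 2 ≤ N) (U : Set (Fin N → ℂ)) (hU : IsOpen U)
    (γ : Fin N → Fin N → (Fin N → ℂ) → ℂ)
    (hhol : ∀ i j : Fin N, i ≠ j → DifferentiableOn ℂ (γ i j) U)
    (hstar : StarSystem U γ)
    (H : Fin N → (Fin N → ℂ) → ℂ)
    (hHhol : ∀ i : Fin N, DifferentiableOn ℂ (H i) U)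
    (hHne : ∀ i : Fin N, ∀ u ∈ U, H i u ≠ 0)
    (hHoff : ∀ i j : Fin N, j ≠ i → ∀ u ∈ U, pder j (H i) u = γ i j u * H i u)
    (hHdiag : ∀ i : Fin N, ∀ u ∈ U,
        pder i (H i) u = -(∑ k ∈ Finset.univ.erase i, γ i k u) * H i u) :
    -- Darboux–Egoroff system for the rotation coefficients γ^i_j = H_i γ̃^i_j H_j^{−1}
    (∀ i j k : Fin N, i ≠ j → j ≠ k → i ≠ k → ∀ u ∈ U,
        pder k (fun w => H i w * γ i j w / H j w) u
          = (H i u * γ i k u / H k u) * (H k u * γ k j u / H j u)) ∧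
    (∀ i j : Fin N, i ≠ j → ∀ u ∈ U,
        ∑ k, pder k (fun w => H i w * γ i j w / H j w) u = 0) ∧
    -- the system for H in terms of the rotation coefficients
    (∀ i j : Fin N, j ≠ i → ∀ u ∈ U,
        pder j (H i) u = (H i u * γ i j u / H j u) * H j u) ∧
    (∀ i : Fin N, ∀ u ∈ U,
        pder i (H i) u = -∑ k ∈ Finset.univ.erase i, (H i u * γ i k u / H k u) * H k u) :=
  statement12_general U hU γ hhol hstar H hHhol hHne hHoff hHdiag

end
end

section
/- Let (F^{α,a})_{a≥0} be a collection of formal power series satisfying the descendant equations (string), (dilaton), (TRR), (REL) with unit A. Define F^α ∈ ℂ[[t^1,…,t^N]] by F^α := F^{α,0} evaluated at t^β_0 = t^β and t^β_b = 0 for b ≥ 1, set c^α_{βγ} := ∂²F^α/∂t^β∂t^γ, and define Ω^{α,d}_β := (∂F^{α,d}/∂t^β_0) evaluated at t^β_0 = t^β and t^β_b = 0 for b ≥ 1 (d ≥ 0), with Ω^{α,−1}_β := δ^α_β. Then: (i) A^μ c^α_{μβ} = δ^α_β for all α,β; (ii) c^α_{βμ} c^μ_{γδ} = c^α_{γμ}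 c^μ_{βδ} for all α,β,γ,δ; (iii) ∂Ω^{α,d}_β/∂t^γ = c^μ_{γβ} Ω^{α,d−1}_μ for all d ≥ 0 and all α,β,γ. In other words, (F^α) is the vector potential of a flat F-manifold with unit A^α ∂/∂t^α and (Ω^{α,d}_β) is a calibration of it. -/
/-!
Common setup: formal power series in the variables `t^β_b` (β ∈ Fin N, b ∈ ℕ),
the descendant/ancestor vector potential equations of a (calibrated) flat F-manifold,
and the generalized Givental upper/lower triangular group actions, following
Arsie–Buryak–Lorenzoni–Rossi, "Semisimple flat F-manifolds in higher genus".
-/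

noncomputable section
open MvPowerSeries

/-- Index of the variable `t^β_b`. -/
abbrev Idx (N : ℕ) := Fin N × ℕ

/-- The ring of formal power series in the variables `t^β_b`. -/
abbrev PS (N : ℕ) := MvPowerSeries (Idx N) ℂ

variable {N : ℕ}

/-- Build a power series from its coefficient function. -/
def ofCoeff (f : (Idx N →₀ ℕ) → ℂ) : PS N := f

/-- The coefficient of a power series at a monomial. -/
def cf (m : Idx N →₀ ℕ) (F : PS N) : ℂ := MvPowerSeries.coeff (R := ℂ) m F

/-- The partial derivative `∂/∂t^β_b` (= `∂/∂q^β_b`) of a formal power series. -/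
def pd (v : Idx N) (F : PS N) : PS N :=
  ofCoeff fun m => ((m v + 1 : ℕ) : ℂ) * cf (m + Finsupp.single v 1) F

/-- The series `q^β_b = t^β_b − A^β δ_{b,1}`, for series centered at the point `p`
(i.e. written in the variables `X_{(β,b)} = t^β_b − p^β δ_{b,0}`):
`q^β_b = X_{(β,b)} + p^β δ_{b,0} − A^β δ_{b,1}`. -/
def qs (p A : Fin N → ℂ) (v : Idx N) : PS N :=
  X v + C (σ := Idx N) (R := ℂ) ((if v.2 = 0 then p v.1 else 0) - (if v.2 = 1 then A v.1 else 0))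

/-- Coefficientwise well-defined infinite sum `Σ_{β, b ≥ 0} X_{(β,b+1)} · G (β,b)`
(used in the string equation). -/
def stringX (G : Idx N → PS N) : PS N :=
  ofCoeff fun m =>
    ∑ v ∈ m.support.filter (fun v => 1 ≤ v.2),
      cf (m - Finsupp.single v 1) (G (v.1, v.2 - 1))

/-- Coefficientwise well-defined infinite sum `Σ_{β, b ≥ 0} X_{(β,b)} · G (β,b)`
(used in the dilaton equation). -/
def dilX (G : Idx N → PS N) : PS N :=
  ofCoeff fun m => ∑ v ∈ m.support, cf (m - Finsupp.single v 1) (G v)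

/-- `(−1)^k` as a complex number. -/
def sg (k : ℕ) : ℂ := if Even k then 1 else -1

/-- `(−1)^d` for an integer `d`. -/
def sgZ (d : ℤ) : ℂ := if Even d then 1 else -1

/-- The extension of the collection `F^{α,a}` to all `a ∈ ℤ` by the convention
`F^{α,a} := (−1)^{a+1} q^α_{−a−1}` for `a < 0`. -/
def FZ (p A : Fin N → ℂ) (F : ℕ → Fin N → PS N) (a : ℤ) (α : Fin N) : PS N :=
  if 0 ≤ a then F a.toNat α
  else C (σ := Idx N) (R := ℂ) (if Even a then -1 else 1) * qs p A (α, (-a - 1).toNat)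

/-- The descendant vector potential equations (string, dilaton, TRR, REL) for a collection
`F^{α,a}` of formal power series centered at `p`, with unit `A`.  All infinite sums over
`b ≥ 0` are the coefficientwise (well-defined) ones. -/
def IsDescendant (p A : Fin N → ℂ) (F : ℕ → Fin N → PS N) : Prop :=
  -- string equation: Σ_{b≥0} q^β_{b+1} ∂F^{α,a}/∂q^β_b = −F^{α,a−1}
  (∀ (a : ℤ) (α : Fin N),
      stringX (fun v => pd v (FZ p A F a α))
        - ∑ β, C (σ := Idx N) (R := ℂ) (A β) * pd (β, 0) (FZ p A F a α)
      = - FZ p A F (a - 1) α) ∧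
  -- dilaton equation: Σ_{b≥0} q^β_b ∂F^{α,a}/∂q^β_b = F^{α,a}
  (∀ (a : ℤ) (α : Fin N),
      dilX (fun v => pd v (FZ p A F a α))
        + ∑ β, C (σ := Idx N) (R := ℂ) (p β) * pd (β, 0) (FZ p A F a α)
        - ∑ β, C (σ := Idx N) (R := ℂ) (A β) * pd (β, 1) (FZ p A F a α)
      = FZ p A F a α) ∧
  -- topological recursion relation
  (∀ (b c : ℕ) (α β γ : Fin N),
      pd (β, b + 1) (pd (γ, c) (F 0 α))
      = ∑ μ, pd (β, b) (F 0 μ) * pd (μ, 0) (pd (γ, c) (F 0 α))) ∧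
  -- the relation controlling descendants
  (∀ (a b : ℕ) (α β : Fin N),
      pd (β, b) (F (a + 1) α) + pd (β, b + 1) (F a α)
      = ∑ μ, pd (μ, 0) (F a α) * pd (β, b) (F 0 μ))

/-- A collection of ancestor vector potentials: descendant vector potentials centered at `0`
all of whose first partial derivatives vanish at `t^*_* = 0`. -/
def IsAncestor (A : Fin N → ℂ) (F : ℕ → Fin N → PS N) : Prop :=
  IsDescendant 0 A F ∧
  ∀ (a : ℕ) (α : Fin N) (v : Idx N),
    MvPowerSeries.constantCoeff (σ := Idx N) (R := ℂ) (pd v (F a α)) = 0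

/-- The monomial substitution: for a monomial `m`, the product `∏_v (P v)^{m v}`. -/
def monSubst (P : Idx N → PS N) (m : Idx N →₀ ℕ) : PS N :=
  m.prod fun v k => P v ^ k

/-- The partial derivative `∂/∂t^β` on power series in finitely many variables `t^1,…,t^N`. -/
def pdN (β : Fin N) (F : MvPowerSeries (Fin N) ℂ) : MvPowerSeries (Fin N) ℂ :=
  (fun d => ((d β + 1 : ℕ) : ℂ) * MvPowerSeries.coeff (R := ℂ) (d + Finsupp.single β 1) F :
    (Fin N →₀ ℕ) → ℂ)

/-- Restriction of a power series in the variables `t^β_b` to `t^β_b = 0` for `b ≥ 1`,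
renaming `t^β_0 = t^β`. -/
def res (F : PS N) : MvPowerSeries (Fin N) ℂ :=
  (fun d => cf (Finsupp.mapDomain (fun β => (β, (0 : ℕ))) d) F : (Fin N →₀ ℕ) → ℂ)

/-- The structure constants `c^α_{βγ} := ∂²F^α/∂t^β∂t^γ` of the restricted genus-0 potential. -/
def cN (F : ℕ → Fin N → PS N) (α β γ : Fin N) : MvPowerSeries (Fin N) ℂ :=
  pdN β (pdN γ (res (F 0 α)))

/-- The calibration `Ω^{α,d}_β := (∂F^{α,d}/∂t^β_0)|_{t^*_{≥1}=0}`. -/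
def ΩN (F : ℕ → Fin N → PS N) (d : ℕ) (α β : Fin N) : MvPowerSeries (Fin N) ℂ :=
  res (pd (β, 0) (F d α))

/-!
Everything is proved first for the unrestricted series, with `MvPowerSeries.pderiv`, and only
then restricted: setting `t^β_b = 0` for `b ≥ 1` is the algebra map `killCompl` along
`β ↦ (β, 0)`, which commutes with `∂/∂t^β_0`.

(i) is the `t^β_0`-derivative of the string equation for `a = 0`; every term of its infinite sum
contains a factor `t^*_{≥1}`, so it vanishes after restriction.

(ii) Differentiate TRR, `∂_{β,b+1} ∂_γ F^{α,0} = ∂_{β,b} F^{μ,0} ∂_{μ,0} ∂_γ F^{α,0}`, in a further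
variable `t_δ`: the left side and one of the two Leibniz terms are symmetric in `γ, δ`, hence so is
the other one, `∂_{μ,0} ∂_γ F^{α,0} ∂_δ ∂_{β,b} F^{μ,0}`.

(iii) Differentiating REL and inserting TRR gives, by induction on `d`, the descendant TRR
`∂_w ∂_{β,b+1} F^{α,d} = ∂_{β,b} F^{μ,0} ∂_w ∂_{μ,0} F^{α,d}`. With it, REL for `b = 0`
differentiated in `t_w` becomes `∂_w ∂_{β,0} F^{α,d+1} = ∂_{μ,0} F^{α,d} ∂_w ∂_{β,0} F^{μ,0}`,
which restricts to (iii).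
-/

namespace MvPowerSeries

variable {σ τ R : Type*} [CommSemiring R]

theorem pderiv_comm (i j : σ) (f : MvPowerSeries σ R) :
    pderiv R i (pderiv R j f) = pderiv R j (pderiv R i f) := by
  obtain rfl | hij := eq_or_ne i j
  · rfl
  ext n
  simp only [coeff_pderiv, Finsupp.add_apply, Finsupp.single_eq_of_ne hij,
    Finsupp.single_eq_of_ne hij.symm, add_zero, add_right_comm n]
  ring

theorem killCompl_pderiv (e : σ ↪ τ) (i : σ) (f : MvPowerSeries τ R) :
    killCompl e (pderiv R (e i) f) = pderiv R i (killCompl e f) := by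
  ext n
  simp [coeff_pderiv, coeff_killCompl, Finsupp.embDomain_add, Finsupp.embDomain_single]

end MvPowerSeries

theorem pd_eq_pderiv (v : Idx N) (F : PS N) : pd v F = pderiv ℂ v F := by
  ext m
  rw [coeff_pderiv, mul_comm]
  exact_mod_cast rfl

theorem pdN_eq_pderiv (β : Fin N) (F : MvPowerSeries (Fin N) ℂ) : pdN β F = pderiv ℂ β F := by
  ext d
  rw [coeff_pderiv, mul_comm]
  exact_mod_cast rfl

def levelZero (N : ℕ) : Fin N ↪ Idx N := ⟨fun β => (β, 0), fun _ _ h => congrArg Prod.fst h⟩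

theorem res_eq_killCompl (F : PS N) : res F = killCompl (levelZero N) F := by
  ext d
  rw [coeff_killCompl, Finsupp.embDomain_eq_mapDomain]
  rfl

theorem killCompl_levelZero_pderiv (β : Fin N) (F : PS N) :
    killCompl (levelZero N) (pderiv ℂ (β, 0) F) = pderiv ℂ β (killCompl (levelZero N) F) :=
  killCompl_pderiv (levelZero N) β F

theorem cN_eq_killCompl (F : ℕ → Fin N → PS N) (α β γ : Fin N) :
    cN F α β γ = killCompl (levelZero N) (pderiv ℂ (β, 0) (pderiv ℂ (γ, 0) (F 0 α))) := by
  rw [cN, pdN_eq_pderiv, pdN_eq_pderiv, res_eq_killCompl, killCompl_levelZero_pderiv,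
    killCompl_levelZero_pderiv]

theorem ΩN_eq_killCompl (F : ℕ → Fin N → PS N) (d : ℕ) (α β : Fin N) :
    ΩN F d α β = killCompl (levelZero N) (pderiv ℂ (β, 0) (F d α)) := by
  rw [ΩN, pd_eq_pderiv, res_eq_killCompl]

theorem pdN_ΩN_zero (F : ℕ → Fin N → PS N) (α β γ : Fin N) :
    pdN γ (ΩN F 0 α β) = cN F α γ β := by
  simp only [ΩN_eq_killCompl, cN_eq_killCompl, pdN_eq_pderiv, killCompl_levelZero_pderiv]

theorem pderiv_stringX (β : Fin N) (G : Idx N → PS N) :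
    pderiv ℂ (β, 0) (stringX G) = stringX fun v => pderiv ℂ (β, 0) (G v) := by
  ext m
  have hβ : ∀ v : Idx N, 1 ≤ v.2 → (β, 0) ≠ v := by
    rintro v hv rfl
    exact Nat.not_succ_le_zero 0 hv
  have hsupp : (m + Finsupp.single (β, 0) 1).support.filter (fun v => 1 ≤ v.2)
      = m.support.filter (fun v => 1 ≤ v.2) := by
    ext v
    simp +contextual [hβ]
  simp only [coeff_pderiv]
  change (∑ v ∈ _, _) * _ = ∑ v ∈ _, _
  rw [hsupp, Finset.sum_mul]
  refine Finset.sum_congr rfl fun v hv => ?_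
  simp only [Finset.mem_filter, Finsupp.mem_support_iff] at hv
  have hvm : Finsupp.single v 1 ≤ m := Finsupp.single_le_iff.mpr (Nat.one_le_iff_ne_zero.mpr hv.1)
  simp only [cf, coeff_pderiv, ← tsub_add_eq_add_tsub hvm, Finsupp.tsub_apply,
    Finsupp.single_eq_of_ne (hβ v hv.2), Nat.sub_zero]

theorem killCompl_stringX (G : Idx N → PS N) : killCompl (levelZero N) (stringX G) = 0 := by
  ext d
  rw [coeff_killCompl, map_zero]
  refine Finset.sum_eq_zero fun v hv => absurd hv ?_
  simp only [Finset.mem_filter, Finsupp.support_embDomain, Finset.mem_map, levelZero]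
  rintro ⟨⟨β, -, rfl⟩, hv⟩
  exact Nat.not_succ_le_zero 0 hv

theorem IsDescendant.sum_C_mul_cN {p A : Fin N → ℂ} {F : ℕ → Fin N → PS N}
    (hF : IsDescendant p A F) (α β : Fin N) :
    ∑ μ, C (A μ) * cN F α μ β = if α = β then 1 else 0 := by
  have hstring : stringX (fun v => pderiv ℂ v (F 0 α))
      - ∑ μ, A μ • pderiv ℂ (μ, 0) (F 0 α) = -(X (α, 0) + C (p α)) := by
    simpa [FZ, qs, pd_eq_pderiv, smul_eq_C_mul] using hF.1 0 α
  have h := congrArg (fun G => killCompl (levelZero N) (pderiv ℂ (β, 0) G)) hstring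
  simp only [map_sub, map_neg, map_add, map_sum, Derivation.map_smul, map_smul, pderiv_C,
    pderiv_stringX, killCompl_stringX, zero_sub, add_zero, neg_inj] at h
  simp only [cN_eq_killCompl, ← smul_eq_C_mul, pderiv_comm _ (β, 0), h]
  obtain rfl | hαβ := eq_or_ne α β
  · simp
  · simp [hαβ]

def TopologicalRecursion (F : ℕ → Fin N → PS N) : Prop :=
  ∀ (b : ℕ) (β : Fin N) (w : Idx N) (α : Fin N),
    pderiv ℂ (β, b + 1) (pderiv ℂ w (F 0 α))
      = ∑ μ, pderiv ℂ (β, b) (F 0 μ) * pderiv ℂ (μ, 0) (pderiv ℂ w (F 0 α))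

def DescendantRelation (F : ℕ → Fin N → PS N) : Prop :=
  ∀ (a b : ℕ) (α β : Fin N),
    pderiv ℂ (β, b) (F (a + 1) α) + pderiv ℂ (β, b + 1) (F a α)
      = ∑ μ, pderiv ℂ (μ, 0) (F a α) * pderiv ℂ (β, b) (F 0 μ)

theorem IsDescendant.topologicalRecursion {p A : Fin N → ℂ} {F : ℕ → Fin N → PS N}
    (hF : IsDescendant p A F) : TopologicalRecursion F := fun b β w α => by
  simpa only [pd_eq_pderiv] using hF.2.2.1 b w.2 α β w.1

theorem IsDescendant.descendantRelation {p A : Fin N → ℂ} {F : ℕ → Fin N → PS N}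
    (hF : IsDescendant p A F) : DescendantRelation F := fun a b α β => by
  simpa only [pd_eq_pderiv] using hF.2.2.2 a b α β

section Recursion

variable {F : ℕ → Fin N → PS N}

theorem TopologicalRecursion.pderiv_pderiv_succ_zero (hT : TopologicalRecursion F)
    (b : ℕ) (α β : Fin N) (w : Idx N) :
    pderiv ℂ w (pderiv ℂ (β, b + 1) (F 0 α))
      = ∑ μ, pderiv ℂ (β, b) (F 0 μ) * pderiv ℂ w (pderiv ℂ (μ, 0) (F 0 α)) := by
  simp only [pderiv_comm w, hT b β w α]

theorem DescendantRelation.pderiv_pderiv_succ (hR : DescendantRelation F) {d b : ℕ} {α β : Fin N}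
    {w : Idx N} (hTRR : pderiv ℂ w (pderiv ℂ (β, b + 1) (F d α))
      = ∑ μ, pderiv ℂ (β, b) (F 0 μ) * pderiv ℂ w (pderiv ℂ (μ, 0) (F d α))) :
    pderiv ℂ w (pderiv ℂ (β, b) (F (d + 1) α))
      = ∑ μ, pderiv ℂ (μ, 0) (F d α) * pderiv ℂ w (pderiv ℂ (β, b) (F 0 μ)) := by
  have h := congrArg (pderiv ℂ w) (hR d b α β)
  simp only [map_add, map_sum, Derivation.leibniz, smul_eq_mul, hTRR, Finset.sum_add_distrib] at h
  linear_combination h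

theorem TopologicalRecursion.pderiv_pderiv_succ (hT : TopologicalRecursion F)
    (hR : DescendantRelation F) (d b : ℕ) (α β : Fin N) (w : Idx N) :
    pderiv ℂ w (pderiv ℂ (β, b + 1) (F d α))
      = ∑ μ, pderiv ℂ (β, b) (F 0 μ) * pderiv ℂ w (pderiv ℂ (μ, 0) (F d α)) := by
  induction d generalizing b β with
  | zero => exact hT.pderiv_pderiv_succ_zero b α β w
  | succ d ih =>
    calc pderiv ℂ w (pderiv ℂ (β, b + 1) (F (d + 1) α))
        = ∑ μ, pderiv ℂ (μ, 0) (F d α) * pderiv ℂ w (pderiv ℂ (β, b + 1) (F 0 μ)) :=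
          hR.pderiv_pderiv_succ (ih (b + 1) β)
      _ = ∑ μ, ∑ ν, pderiv ℂ (μ, 0) (F d α)
            * (pderiv ℂ (β, b) (F 0 ν) * pderiv ℂ w (pderiv ℂ (ν, 0) (F 0 μ))) := by
          simp only [hT.pderiv_pderiv_succ_zero, Finset.mul_sum]
      _ = ∑ ν, pderiv ℂ (β, b) (F 0 ν)
            * ∑ μ, pderiv ℂ (μ, 0) (F d α) * pderiv ℂ w (pderiv ℂ (ν, 0) (F 0 μ)) := by
          rw [Finset.sum_comm]
          simp only [Finset.mul_sum, mul_left_comm]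
      _ = ∑ ν, pderiv ℂ (β, b) (F 0 ν) * pderiv ℂ w (pderiv ℂ (ν, 0) (F (d + 1) α)) := by
          refine Finset.sum_congr rfl fun ν _ => ?_
          rw [hR.pderiv_pderiv_succ (ih 0 ν)]

theorem TopologicalRecursion.sum_pderiv_mul_pderiv_comm (hT : TopologicalRecursion F)
    (b : ℕ) (α β : Fin N) (w w' : Idx N) :
    ∑ μ, pderiv ℂ (μ, 0) (pderiv ℂ w' (F 0 α)) * pderiv ℂ w (pderiv ℂ (β, b) (F 0 μ))
      = ∑ μ, pderiv ℂ (μ, 0) (pderiv ℂ w (F 0 α)) * pderiv ℂ w' (pderiv ℂ (β, b) (F 0 μ)) := by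
  have h := congrArg (pderiv ℂ w) (hT b β w' α)
  have h' := congrArg (pderiv ℂ w') (hT b β w α)
  simp only [map_sum, Derivation.leibniz, smul_eq_mul, Finset.sum_add_distrib] at h h'
  have hcomm : ∀ (u : Idx N) (G : PS N),
      pderiv ℂ w (pderiv ℂ u (pderiv ℂ w' G)) = pderiv ℂ w' (pderiv ℂ u (pderiv ℂ w G)) := by
    intro u G
    rw [pderiv_comm u w', pderiv_comm w w', pderiv_comm w u]
  simp only [hcomm] at h
  linear_combination h' - h

theorem TopologicalRecursion.sum_cN_mul_cN_comm (hT : TopologicalRecursion F) (α β γ δ : Fin N) :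
    ∑ μ, cN F α β μ * cN F μ γ δ = ∑ μ, cN F α γ μ * cN F μ β δ := by
  have h := congrArg (killCompl (levelZero N))
    (hT.sum_pderiv_mul_pderiv_comm 0 α δ (γ, 0) (β, 0))
  simp only [map_sum, map_mul] at h
  simpa only [cN_eq_killCompl, pderiv_comm (β, 0) (_, 0), pderiv_comm (γ, 0) (_, 0)] using h

theorem TopologicalRecursion.pdN_ΩN_succ (hT : TopologicalRecursion F)
    (hR : DescendantRelation F) (d : ℕ) (α β γ : Fin N) :
    pdN γ (ΩN F (d + 1) α β) = ∑ μ, cN F μ γ β * ΩN F d α μ := by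
  rw [ΩN_eq_killCompl, pdN_eq_pderiv, ← killCompl_levelZero_pderiv,
    hR.pderiv_pderiv_succ (hT.pderiv_pderiv_succ hR d 0 α β (γ, 0)), map_sum]
  refine Finset.sum_congr rfl fun μ _ => ?_
  rw [map_mul, mul_comm, cN_eq_killCompl, ΩN_eq_killCompl]

end Recursion

/-- A collection of descendant vector potentials restricts, at
`t^*_{≥1} = 0`, to the vector potential of a flat F-manifold with unit `A`, and the restricted
first `t_0`-derivatives `Ω^{α,d}_β` form a calibration of it. -/
theorem statement13 {N : ℕ} (p A : Fin N → ℂ) (F : ℕ → Fin N → PS N)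
    (hF : IsDescendant p A F) :
    -- (i) A^μ c^α_{μβ} = δ^α_β
    (∀ α β : Fin N,
        ∑ μ, MvPowerSeries.C (σ := Fin N) (R := ℂ) (A μ) * cN F α μ β
          = if α = β then 1 else 0) ∧
    -- (ii) associativity
    (∀ α β γ δ : Fin N,
        ∑ μ, cN F α β μ * cN F μ γ δ = ∑ μ, cN F α γ μ * cN F μ β δ) ∧
    -- (iii) calibration property, with Ω^{α,−1}_β = δ^α_β
    (∀ α β γ : Fin N, pdN γ (ΩN F 0 α β) = cN F α γ β) ∧
    (∀ (d : ℕ) (α β γ : Fin N),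
        pdN γ (ΩN F (d + 1) α β) = ∑ μ, cN F μ γ β * ΩN F d α μ) := by
  have hT := hF.topologicalRecursion
  exact ⟨hF.sum_C_mul_cN, hT.sum_cN_mul_cN_comm, pdN_ΩN_zero F, hT.pdN_ΩN_succ hF.descendantRelation⟩
end
end

section
/- Let (F^{α,a})_{a≥0} be formal power series satisfying the equations (TRR) and (REL). Then for all a,b,c ≥ 0: ∂²F^{α,a}/∂q^β_{b+1}∂q^γ_c = (∂F^{μ,0}/∂q^β_b)(∂²F^{α,a}/∂q^μ_0∂q^γ_c) and ∂²F^{α,a+1}/∂q^β_b∂q^γ_c = (∂F^{α,a}/∂q^μ_0)(∂²F^{μ,0}/∂q^β_b∂q^γ_c). -/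
/-!
Common setup: formal power series in the variables `t^β_b` (β ∈ Fin N, b ∈ ℕ),
the descendant/ancestor vector potential equations of a (calibrated) flat F-manifold,
and the generalized Givental upper/lower triangular group actions, following
Arsie–Buryak–Lorenzoni–Rossi, "Semisimple flat F-manifolds in higher genus".
-/

noncomputable section
open MvPowerSeries

variable {N : ℕ}

/-!
Differentiating (REL) with respect to `q^γ_c` and using the TRR for `F^{α,a}` cancels the
`∂/∂q^β_{b+1}` term, which leaves the second formula at level `a + 1`. Substituting the TRR
for the `F^{μ,0}` into that formula gives the TRR for `F^{α,a+1}`, so both follow by induction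
on `a`. Only the Leibniz rule and the commutation of the partial derivatives enter.
-/

theorem MvPowerSeries.pderiv_pderiv_comm {σ R : Type*} [CommSemiring R] (i j : σ)
    (f : MvPowerSeries σ R) : pderiv R i (pderiv R j f) = pderiv R j (pderiv R i f) := by
  classical
  ext n
  simp only [coeff_pderiv, add_right_comm n (Finsupp.single i 1) (Finsupp.single j 1)]
  rcases eq_or_ne i j with rfl | hij
  · rfl
  · simp only [Finsupp.add_apply, Finsupp.single_apply, if_neg hij, if_neg hij.symm, add_zero]
    ring

section Derivations

variable {κ A R : Type*} [Fintype κ] [CommSemiring A] [CommRing R] [Algebra A R]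
  (D : κ × ℕ → Derivation A R R)

/-- The TRR for `g` relative to the primaries `Φ μ = F^{μ,0}`. -/
def SatisfiesTRR (Φ : κ → R) (g : R) : Prop :=
  ∀ (b c : ℕ) (β γ : κ),
    D (β, b + 1) (D (γ, c) g) = ∑ μ, D (β, b) (Φ μ) * D (μ, 0) (D (γ, c) g)

/-- The relation (REL) between `g = F^{α,a}` and `h = F^{α,a+1}`. -/
def SatisfiesREL (Φ : κ → R) (g h : R) : Prop :=
  ∀ (b : ℕ) (β : κ), D (β, b) h + D (β, b + 1) g = ∑ μ, D (μ, 0) g * D (β, b) (Φ μ)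

variable {D}

theorem SatisfiesREL.deriv_deriv_eq (hD : ∀ u v x, D u (D v x) = D v (D u x))
    {Φ : κ → R} {g h : R} (hREL : SatisfiesREL D Φ g h) (hg : SatisfiesTRR D Φ g)
    (b c : ℕ) (β γ : κ) :
    D (β, b) (D (γ, c) h) = ∑ μ, D (μ, 0) g * D (β, b) (D (γ, c) (Φ μ)) := by
  have hdiff := congrArg (D (γ, c)) (hREL b β)
  simp only [map_add, map_sum, Derivation.leibniz, smul_eq_mul, Finset.sum_add_distrib] at hdiff
  have hcancel : D (γ, c) (D (β, b + 1) g) = ∑ μ, D (β, b) (Φ μ) * D (γ, c) (D (μ, 0) g) := by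
    simp only [hD (γ, c), hg b c β γ]
  rw [hcancel] at hdiff
  rw [hD, add_right_cancel hdiff]
  simp only [hD (γ, c) (β, b)]

theorem satisfiesTRR_of_deriv_deriv_eq {Φ : κ → R} (hΦ : ∀ μ, SatisfiesTRR D Φ (Φ μ))
    {g h : R}
    (hh : ∀ b c β γ, D (β, b) (D (γ, c) h) = ∑ μ, D (μ, 0) g * D (β, b) (D (γ, c) (Φ μ))) :
    SatisfiesTRR D Φ h := by
  intro b c β γ
  calc D (β, b + 1) (D (γ, c) h)
      = ∑ μ, D (μ, 0) g * ∑ ν, D (β, b) (Φ ν) * D (ν, 0) (D (γ, c) (Φ μ)) := by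
        simp only [hh, hΦ _ b c β γ]
    _ = ∑ ν, D (β, b) (Φ ν) * ∑ μ, D (μ, 0) g * D (ν, 0) (D (γ, c) (Φ μ)) := by
        simp only [Finset.mul_sum]
        rw [Finset.sum_comm]
        exact Finset.sum_congr rfl fun _ _ => Finset.sum_congr rfl fun _ _ => by ring
    _ = ∑ ν, D (β, b) (Φ ν) * D (ν, 0) (D (γ, c) h) := by
        simp only [hh]

theorem satisfiesTRR_of_satisfiesREL (hD : ∀ u v x, D u (D v x) = D v (D u x))
    (F : ℕ → κ → R) (hTRR : ∀ α, SatisfiesTRR D (F 0) (F 0 α))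
    (hREL : ∀ a α, SatisfiesREL D (F 0) (F a α) (F (a + 1) α)) (a : ℕ) (α : κ) :
    SatisfiesTRR D (F 0) (F a α) := by
  induction a generalizing α with
  | zero => exact hTRR α
  | succ a ih =>
    exact satisfiesTRR_of_deriv_deriv_eq hTRR ((hREL a α).deriv_deriv_eq hD (ih α))

end Derivations

/-- The equations (TRR) and (REL) imply the generalized topological recursion
relations for all `a, b, c ≥ 0`. -/
theorem statement14 {N : ℕ} (F : ℕ → Fin N → PS N)
    (hTRR : ∀ (b c : ℕ) (α β γ : Fin N),
        pd (β, b + 1) (pd (γ, c) (F 0 α))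
          = ∑ μ, pd (β, b) (F 0 μ) * pd (μ, 0) (pd (γ, c) (F 0 α)))
    (hREL : ∀ (a b : ℕ) (α β : Fin N),
        pd (β, b) (F (a + 1) α) + pd (β, b + 1) (F a α)
          = ∑ μ, pd (μ, 0) (F a α) * pd (β, b) (F 0 μ)) :
    (∀ (a b c : ℕ) (α β γ : Fin N),
        pd (β, b + 1) (pd (γ, c) (F a α))
          = ∑ μ, pd (β, b) (F 0 μ) * pd (μ, 0) (pd (γ, c) (F a α))) ∧
    (∀ (a b c : ℕ) (α β γ : Fin N),
        pd (β, b) (pd (γ, c) (F (a + 1) α))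
          = ∑ μ, pd (μ, 0) (F a α) * pd (β, b) (pd (γ, c) (F 0 μ))) := by
  simp only [pd_eq_pderiv] at hTRR hREL ⊢
  have hcomm : ∀ u v (x : PS N), pderiv ℂ u (pderiv ℂ v x) = pderiv ℂ v (pderiv ℂ u x) :=
    pderiv_pderiv_comm
  have hrel : ∀ a α, SatisfiesREL (pderiv ℂ) (F 0) (F a α) (F (a + 1) α) :=
    fun a α b β => hREL a b α β
  have htrr := satisfiesTRR_of_satisfiesREL hcomm F (fun α b c β γ => hTRR b c α β γ) hrel
  exact ⟨fun a b c α β γ => htrr a α b c β γ,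
    fun a b c α β γ => (hrel a α).deriv_deriv_eq hcomm (htrr a α) b c β γ⟩

end
end

section
/- Let (F^{α,a}) be a collection of ancestor vector potentials with unit A. Assign to the variable t^β_b the degree b − 1. Then for every α and every a ≥ 0, every monomial t^{β_1}_{b_1} ⋯ t^{β_n}_{b_n} occurring with nonzero coefficient in F^{α,a} satisfies Σ_{i=1}^n (b_i − 1) ≤ −a − 2; in particular every such monomial has n ≥ a + 2 factors. -/
/-!
Common setup: formal power series in the variables `t^β_b` (β ∈ Fin N, b ∈ ℕ),
the descendant/ancestor vector potential equations of a (calibrated) flat F-manifold,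
and the generalized Givental upper/lower triangular group actions, following
Arsie–Buryak–Lorenzoni–Rossi, "Semisimple flat F-manifolds in higher genus".
-/

noncomputable section
open MvPowerSeries

variable {N : ℕ}

/-!
Give `t^β_b` the degree `b - 1`. Ancestor potentials have no linear terms by assumption and no
constant term by the dilaton equation at the origin, so every monomial has at least two factors.
For `a = 0`, a monomial of degree `≥ -1` with at least two factors contains some `t^β_{b+1}`,
and the TRR writes its coefficient through products of coefficients of monomials with fewer
factors whose degrees add up to two less; induction on the number of factors gives degree
`≤ -2`. For `a > 0` the relation REL writes `∂F^{α,a+1}/∂t^β_b` through `∂F^{α,a}/∂t^β_{b+1}`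
and the products `∂F^{α,a}/∂t^μ_0 · ∂F^{μ,0}/∂t^β_b`, which gives the bound by induction on `a`.
Finally, a monomial with `n` factors has degree at least `-n`.
-/

section DegreeBound

variable {N : ℕ}

def tDeg : (Idx N →₀ ℕ) →+ ℤ := Finsupp.weight fun v => (v.2 : ℤ) - 1

lemma tDeg_single (v : Idx N) : tDeg (Finsupp.single v 1) = (v.2 : ℤ) - 1 := by
  simp [tDeg, Finsupp.weight_single]

lemma tDeg_add_degree (m : Idx N →₀ ℕ) :
    tDeg m + (m.degree : ℤ) = ∑ v ∈ m.support, (m v : ℤ) * v.2 := by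
  simp only [tDeg, Finsupp.weight_apply, Finsupp.sum, Finsupp.degree_apply, Nat.cast_sum,
    nsmul_eq_mul, ← Finset.sum_add_distrib]
  exact Finset.sum_congr rfl fun _ _ => by ring

lemma neg_degree_le_tDeg (m : Idx N →₀ ℕ) : -(m.degree : ℤ) ≤ tDeg m := by
  have := tDeg_add_degree m
  have : 0 ≤ ∑ v ∈ m.support, (m v : ℤ) * v.2 := Finset.sum_nonneg fun _ _ => by positivity
  omega

lemma tDeg_eq_neg_degree {m : Idx N →₀ ℕ} (h : ∀ v ∈ m.support, v.2 = 0) :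
    tDeg m = -(m.degree : ℤ) := by
  have := tDeg_add_degree m
  rw [Finset.sum_eq_zero fun v hv => by simp [h v hv]] at this
  omega

lemma exists_eq_add_single_of_mem_support {m : Idx N →₀ ℕ} {v : Idx N} (hv : v ∈ m.support) :
    ∃ m', m = m' + Finsupp.single v 1 :=
  ⟨_, (Finsupp.sub_add_single_one_cancel (Finsupp.mem_support_iff.mp hv)).symm⟩

lemma cf_pd (v : Idx N) (P : PS N) (m : Idx N →₀ ℕ) :
    cf m (pd v P) = ((m v + 1 : ℕ) : ℂ) * cf (m + Finsupp.single v 1) P := rfl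

lemma cf_pd_ne_zero_iff {v : Idx N} {P : PS N} {m : Idx N →₀ ℕ} :
    cf m (pd v P) ≠ 0 ↔ cf (m + Finsupp.single v 1) P ≠ 0 := by
  rw [cf_pd, mul_ne_zero_iff, and_iff_right (Nat.cast_ne_zero.mpr (Nat.succ_ne_zero _))]

lemma exists_of_cf_sum_mul_ne_zero {ι : Type*} {s : Finset ι} {P Q : ι → PS N}
    {m : Idx N →₀ ℕ} (h : cf m (∑ i ∈ s, P i * Q i) ≠ 0) :
    ∃ i, ∃ m₁ m₂, m₁ + m₂ = m ∧ cf m₁ (P i) ≠ 0 ∧ cf m₂ (Q i) ≠ 0 := by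
  simp only [cf, map_sum, MvPowerSeries.coeff_mul] at h
  obtain ⟨i, -, hi⟩ := Finset.exists_ne_zero_of_sum_ne_zero h
  obtain ⟨⟨m₁, m₂⟩, hm, hne⟩ := Finset.exists_ne_zero_of_sum_ne_zero hi
  exact ⟨i, m₁, m₂, Finset.HasAntidiagonal.mem_antidiagonal.mp hm, left_ne_zero_of_mul hne,
    right_ne_zero_of_mul hne⟩

variable {p A : Fin N → ℂ} {F : ℕ → Fin N → PS N}

lemma FZ_natCast (a : ℕ) (α : Fin N) : FZ p A F a α = F a α := by
  simp [FZ]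

lemma IsDescendant.exists_of_cf_zero_ne_zero (hF : IsDescendant p A F) {α β γ : Fin N}
    {b c : ℕ} {m : Idx N →₀ ℕ}
    (h : cf (m + Finsupp.single (β, b + 1) 1 + Finsupp.single (γ, c) 1) (F 0 α) ≠ 0) :
    ∃ μ, ∃ m₁ m₂, m₁ + m₂ = m ∧ cf (m₁ + Finsupp.single (β, b) 1) (F 0 μ) ≠ 0 ∧
      cf (m₂ + Finsupp.single (μ, 0) 1 + Finsupp.single (γ, c) 1) (F 0 α) ≠ 0 := by
  rw [← cf_pd_ne_zero_iff, ← cf_pd_ne_zero_iff, hF.2.2.1 b c α β γ] at h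
  simpa only [cf_pd_ne_zero_iff] using exists_of_cf_sum_mul_ne_zero h

lemma IsDescendant.of_cf_succ_ne_zero (hF : IsDescendant p A F) {a : ℕ} {α β : Fin N}
    {b : ℕ} {m : Idx N →₀ ℕ} (h : cf (m + Finsupp.single (β, b) 1) (F (a + 1) α) ≠ 0) :
    cf (m + Finsupp.single (β, b + 1) 1) (F a α) ≠ 0 ∨
      ∃ μ, ∃ m₁ m₂, m₁ + m₂ = m ∧ cf (m₁ + Finsupp.single (μ, 0) 1) (F a α) ≠ 0 ∧
        cf (m₂ + Finsupp.single (β, b) 1) (F 0 μ) ≠ 0 := by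
  rw [← cf_pd_ne_zero_iff, eq_sub_of_add_eq (hF.2.2.2 a b α β)] at h
  by_cases hsum : cf m (∑ μ, pd (μ, 0) (F a α) * pd (β, b) (F 0 μ)) = 0
  · left
    rw [← cf_pd_ne_zero_iff]
    unfold cf at h hsum ⊢
    rwa [map_sub, hsum, zero_sub, neg_ne_zero] at h
  · right
    simpa only [cf_pd_ne_zero_iff] using exists_of_cf_sum_mul_ne_zero hsum

lemma IsAncestor.cf_single_eq_zero (hF : IsAncestor A F) (a : ℕ) (α : Fin N) (v : Idx N) :
    cf (Finsupp.single v 1) (F a α) = 0 := by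
  have h : cf 0 (pd v (F a α)) = 0 := by
    rw [cf, MvPowerSeries.coeff_zero_eq_constantCoeff_apply]
    exact hF.2 a α v
  simpa [cf_pd] using h

-- The dilaton equation at `t = 0` reads `F^{α,a}(0) = -Σ_β A^β ∂F^{α,a}/∂t^β_1 (0)`.
lemma IsAncestor.cf_zero_eq_zero (hF : IsAncestor A F) (a : ℕ) (α : Fin N) :
    cf 0 (F a α) = 0 := by
  have hpd (v : Idx N) : cf 0 (pd v (F a α)) = 0 := by
    simp [cf_pd, hF.cf_single_eq_zero]
  have h := congrArg (cf 0) (hF.1.2.1 a α)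
  simp only [FZ_natCast, Pi.zero_apply, map_zero, zero_mul, Finset.sum_const_zero,
    add_zero] at h
  have hdil : cf 0 (dilX fun v => pd v (F a α)) = 0 := rfl
  rw [← h]
  unfold cf at hpd hdil ⊢
  rw [map_sub, map_sum, hdil, zero_sub, neg_eq_zero]
  exact Finset.sum_eq_zero fun β _ => by rw [MvPowerSeries.coeff_C_mul, hpd, mul_zero]

lemma IsAncestor.two_le_degree (hF : IsAncestor A F) {a : ℕ} {α : Fin N}
    {m : Idx N →₀ ℕ} (h : cf m (F a α) ≠ 0) : 2 ≤ m.degree := by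
  obtain ⟨v, hv⟩ : m.support.Nonempty :=
    Finsupp.support_nonempty_iff.mpr fun h0 => h (h0 ▸ hF.cf_zero_eq_zero a α)
  obtain ⟨m', rfl⟩ := exists_eq_add_single_of_mem_support hv
  have hm' : m' ≠ 0 := by
    rintro rfl
    exact h (by simpa using hF.cf_single_eq_zero a α v)
  rw [map_add, Finsupp.degree_single]
  have := mt (Finsupp.degree_eq_zero_iff m').mp hm'
  omega

lemma IsAncestor.tDeg_le_of_cf_zero_ne_zero (hF : IsAncestor A F) {α : Fin N}
    {m : Idx N →₀ ℕ} (h : cf m (F 0 α) ≠ 0) : tDeg m ≤ -2 := by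
  induction hn : m.degree using Nat.strong_induction_on generalizing α m with
  | _ n ih =>
  subst hn
  have hm2 := hF.two_le_degree h
  by_cases hsnd : ∀ v ∈ m.support, v.2 = 0
  · rw [tDeg_eq_neg_degree hsnd]
    omega
  push Not at hsnd
  obtain ⟨⟨β, _⟩, hv, hb⟩ := hsnd
  obtain ⟨b, rfl⟩ := Nat.exists_eq_add_one_of_ne_zero hb
  obtain ⟨m', rfl⟩ := exists_eq_add_single_of_mem_support hv
  have hm' : m' ≠ 0 := by
    rintro rfl
    simp at hm2
  obtain ⟨⟨γ, c⟩, hw⟩ := Finsupp.support_nonempty_iff.mpr hm'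
  obtain ⟨m₀, rfl⟩ := exists_eq_add_single_of_mem_support hw
  rw [add_right_comm] at h
  obtain ⟨μ, m₁, m₂, rfl, h₁, h₂⟩ := hF.1.exists_of_cf_zero_ne_zero h
  -- `m₁ ≠ 0` as `F^{μ,0}` has no linear terms, so both factors have fewer variables than `m`.
  have hm₁ := hF.two_le_degree h₁
  simp only [map_add, Finsupp.degree_single] at hm₁
  have ih₁ := ih _ (by simp only [map_add, Finsupp.degree_single]; omega) h₁ rfl
  have ih₂ := ih _ (by simp only [map_add, Finsupp.degree_single]; omega) h₂ rfl
  simp only [map_add, tDeg_single] at ih₁ ih₂ ⊢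
  push_cast at ih₁ ih₂ ⊢
  omega

lemma IsAncestor.tDeg_le_of_cf_ne_zero (hF : IsAncestor A F) {a : ℕ} {α : Fin N}
    {m : Idx N →₀ ℕ} (h : cf m (F a α) ≠ 0) : tDeg m ≤ -(a : ℤ) - 2 := by
  induction a generalizing α m with
  | zero => simpa using hF.tDeg_le_of_cf_zero_ne_zero h
  | succ a ih =>
  have hm : m ≠ 0 := by
    rintro rfl
    simpa using hF.two_le_degree h
  obtain ⟨⟨β, b⟩, hv⟩ := Finsupp.support_nonempty_iff.mpr hm
  obtain ⟨m', rfl⟩ := exists_eq_add_single_of_mem_support hv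
  rcases hF.1.of_cf_succ_ne_zero h with h' | ⟨μ, m₁, m₂, rfl, h₁, h₂⟩
  · have := ih h'
    simp only [map_add, tDeg_single] at this ⊢
    push_cast at this ⊢
    omega
  · have ih₁ := ih h₁
    have ih₂ := hF.tDeg_le_of_cf_zero_ne_zero h₂
    simp only [map_add, tDeg_single] at ih₁ ih₂ ⊢
    push_cast at ih₁ ih₂ ⊢
    omega

end DegreeBound

/-- Assigning to the variable `t^β_b` the degree `b − 1`, every monomial
occurring with nonzero coefficient in an ancestor vector potential `F^{α,a}` has degree
at most `−a − 2`; in particular it has at least `a + 2` factors. -/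
theorem statement16 {N : ℕ} (A : Fin N → ℂ) (F : ℕ → Fin N → PS N)
    (hF : IsAncestor A F) :
    ∀ (a : ℕ) (α : Fin N) (m : Idx N →₀ ℕ), cf m (F a α) ≠ 0 →
      (∑ v ∈ m.support, (m v : ℤ) * ((v.2 : ℤ) - 1)) ≤ -(a : ℤ) - 2 ∧
      (a : ℤ) + 2 ≤ ∑ v ∈ m.support, (m v : ℤ) := by
  intro a α m h
  have hdeg : ∑ v ∈ m.support, (m v : ℤ) * ((v.2 : ℤ) - 1) = tDeg m := by
    simp [tDeg, Finsupp.weight_apply, Finsupp.sum]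
  have hsize : ∑ v ∈ m.support, (m v : ℤ) = m.degree := by
    simp [Finsupp.degree_apply]
  rw [hdeg, hsize]
  have := hF.tDeg_le_of_cf_ne_zero h
  have := neg_degree_le_tDeg m
  omega

end
end
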